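/- arXiv:2011.10205 — 5 statements merged into one kernel-verified Lean document; each statement's English description precedes it below -/
import Mathlib

section
/- Fix a subset S' ⊆ [n], a strategy profile p, service rates μ, and arrival rates λ with all λ_i > 0. If S and T are both nonempty subsets of [n] \ S' minimizing f(· | p, μ, λ, S') over all nonempty subsets of [n] \ S', then S ∪ T is also a minimizer, and if S ∩ T is nonempty then S ∩ T is also a minimizer. -/
open Finset

/-- Membership of a vector in the probability simplex `Δ^{m-1}`. -/
def inSimplex {m : ℕ} (q : Fin m → ℝ) : Prop :=
  (∀ j, 0 ≤ q j) ∧ ∑ j, q j = 1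

/-- `α(S | p, μ, S')`: expected number of packets cleared by the queues in `S` in one round,
when the queues in `S'` have priority over `S` and `S` has priority over all other queues. -/
noncomputable def alphaQ {n m : ℕ} (p : Fin n → Fin m → ℝ) (μ : Fin m → ℝ)
    (S S' : Finset (Fin n)) : ℝ :=
  ∑ j : Fin m, μ j * (∏ i ∈ S', (1 - p i j)) * (1 - ∏ i ∈ S, (1 - p i j))

/-- `λ(S)`: total arrival rate of the queues in `S`. -/
def lamQ {n : ℕ} (lam : Fin n → ℝ) (S : Finset (Fin n)) : ℝ :=
  ∑ i ∈ S, lam i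

/-- `f(S | p, μ, λ, S') = α(S | p, μ, S') / λ(S)`. -/
noncomputable def fQ {n m : ℕ} (p : Fin n → Fin m → ℝ) (μ : Fin m → ℝ) (lam : Fin n → ℝ)
    (S S' : Finset (Fin n)) : ℝ :=
  alphaQ p μ S S' / lamQ lam S

open scoped Classical in
/-- The union of all nonempty subsets `S ⊆ I` minimizing `f(· | p, μ, λ, S')` over the
nonempty subsets of `I` (the "largest-cardinality minimizer"). -/
noncomputable def unionMin {n m : ℕ} (p : Fin n → Fin m → ℝ) (μ : Fin m → ℝ) (lam : Fin n → ℝ)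
    (I S' : Finset (Fin n)) : Finset (Fin n) :=
  I.powerset.sup fun S =>
    if S.Nonempty ∧ ∀ T ∈ I.powerset, T.Nonempty → fQ p μ lam S S' ≤ fQ p μ lam T S' then S
    else ∅

/-- The group selected by one step of the rate algorithm on remaining queues `I`
with current (already discounted) service rates `μ`. -/
noncomputable def topSet {n m : ℕ} (p : Fin n → Fin m → ℝ) (μ : Fin m → ℝ) (lam : Fin n → ℝ)
    (I : Finset (Fin n)) : Finset (Fin n) :=
  unionMin p μ lam I ∅

open scoped Classical in
/-- Fuelled version of the recursive rate algorithm: `I` is the set of remaining queues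
and `μc` the current (discounted) service rates. -/
noncomputable def rateAux {n m : ℕ} (lam : Fin n → ℝ) (p : Fin n → Fin m → ℝ) :
    ℕ → Finset (Fin n) → (Fin m → ℝ) → Fin n → ℝ
  | 0, _, _, _ => 0
  | fuel + 1, I, μc, i =>
    if ∀ S ∈ I.powerset, S.Nonempty → 1 ≤ fQ p μc lam S ∅ then 0
    else if i ∈ topSet p μc lam I then 1 - fQ p μc lam (topSet p μc lam I) ∅
    else
      rateAux lam p fuel (I \ topSet p μc lam I)
        (fun j => μc j * ∏ r ∈ topSet p μc lam I, (1 - p r j)) i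

/-- The rate function `r : (Δ^{m-1})^n → [0,1]^n` computed by the recursive algorithm:
`rateQ lam μ p i` is the long-run aging rate `r_i(p)` of queue `i`. -/
noncomputable def rateQ {n m : ℕ} (lam : Fin n → ℝ) (μ : Fin m → ℝ)
    (p : Fin n → Fin m → ℝ) (i : Fin n) : ℝ :=
  rateAux lam p (n + 1) Finset.univ μ i

/-- State (remaining queues, discounted service rates) of the rate algorithm after `k` steps. -/
noncomputable def stateQ {n m : ℕ} (lam : Fin n → ℝ) (μ : Fin m → ℝ)
    (p : Fin n → Fin m → ℝ) : ℕ → Finset (Fin n) × (Fin m → ℝ)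
  | 0 => (Finset.univ, μ)
  | k + 1 =>
    ((stateQ lam μ p k).1 \ topSet p (stateQ lam μ p k).2 lam (stateQ lam μ p k).1,
      fun j => (stateQ lam μ p k).2 j *
        ∏ r ∈ topSet p (stateQ lam μ p k).2 lam (stateQ lam μ p k).1, (1 - p r j))

/-- `g_{k+1} = max {0, 1 - f_{k+1}}`: the aging rate of the `(k+1)`st group output by
the rate algorithm (`k = 0` corresponds to `S_1`). -/
noncomputable def gQ {n m : ℕ} (lam : Fin n → ℝ) (μ : Fin m → ℝ)
    (p : Fin n → Fin m → ℝ) (k : ℕ) : ℝ :=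
  max 0 (1 - fQ p (stateQ lam μ p k).2 lam
    (topSet p (stateQ lam μ p k).2 lam (stateQ lam μ p k).1) ∅)

/-- `f* = min_{∅ ≠ S ⊆ [n]} f(S | p)`. -/
noncomputable def fstarQ {n m : ℕ} (p : Fin n → Fin m → ℝ) (μ : Fin m → ℝ)
    (lam : Fin n → ℝ) : ℝ :=
  sInf ((fun S => fQ p μ lam S ∅) '' {S : Finset (Fin n) | S.Nonempty})

/-- A nonempty subset is tight if it minimizes `f(· | p)` over all nonempty subsets of `[n]`. -/
def IsTight {n m : ℕ} (p : Fin n → Fin m → ℝ) (μ : Fin m → ℝ) (lam : Fin n → ℝ)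
    (S : Finset (Fin n)) : Prop :=
  S.Nonempty ∧ ∀ T : Finset (Fin n), T.Nonempty → fQ p μ lam S ∅ ≤ fQ p μ lam T ∅

/-- `T` is a level subset at the next level, given that `W` is the union of all level
subsets at the previous levels: `T` is an inclusion-minimal nonempty subset of `K \ W`
with `f(T | W) = f*`, where `K` is the union of all tight subsets. -/
def IsLevelSet {n m : ℕ} (p : Fin n → Fin m → ℝ) (μ : Fin m → ℝ) (lam : Fin n → ℝ)
    (W T : Finset (Fin n)) : Prop :=
  T.Nonempty ∧ T ⊆ unionMin p μ lam Finset.univ ∅ \ W ∧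
    fQ p μ lam T W = fstarQ p μ lam ∧
    ∀ T' : Finset (Fin n), T'.Nonempty → T' ⊆ T →
      fQ p μ lam T' W = fstarQ p μ lam → T' = T

open scoped Classical in
/-- `levelUnion p μ lam ℓ` is the union of all level subsets at levels `≤ ℓ`
in the level partition of the union `K` of all tight subsets. -/
noncomputable def levelUnion {n m : ℕ} (p : Fin n → Fin m → ℝ) (μ : Fin m → ℝ)
    (lam : Fin n → ℝ) : ℕ → Finset (Fin n)
  | 0 => ∅
  | ℓ + 1 =>
    levelUnion p μ lam ℓ ∪
      Finset.univ.powerset.sup fun T =>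
        if IsLevelSet p μ lam (levelUnion p μ lam ℓ) T then T else ∅

/-- **Closure of minimizers (Lemma 3.2, first part).** If `S` and `T` both minimize
`f(· | p, μ, λ, S')` over the nonempty subsets of `[n] \ S'`, then so does `S ∪ T`,
and so does `S ∩ T` whenever it is nonempty. -/
theorem statement4 {n m : ℕ} (hn : 1 ≤ n) (hm : 1 ≤ m)
    (lam : Fin n → ℝ) (μ : Fin m → ℝ) (p : Fin n → Fin m → ℝ)
    (hlam : ∀ i, 0 < lam i ∧ lam i < 1) (hmu : ∀ j, 0 ≤ μ j ∧ μ j ≤ 1)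
    (hp : ∀ i, inSimplex (p i))
    (S' S T : Finset (Fin n)) (hSne : S.Nonempty) (hTne : T.Nonempty)
    (hSd : Disjoint S S') (hTd : Disjoint T S')
    (hSmin : ∀ W : Finset (Fin n), W.Nonempty → Disjoint W S' →
      fQ p μ lam S S' ≤ fQ p μ lam W S')
    (hTmin : ∀ W : Finset (Fin n), W.Nonempty → Disjoint W S' →
      fQ p μ lam T S' ≤ fQ p μ lam W S') :
    (∀ W : Finset (Fin n), W.Nonempty → Disjoint W S' →
      fQ p μ lam (S ∪ T) S' ≤ fQ p μ lam W S') ∧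
    ((S ∩ T).Nonempty → ∀ W : Finset (Fin n), W.Nonempty → Disjoint W S' →
      fQ p μ lam (S ∩ T) S' ≤ fQ p μ lam W S') := by
    classical
  have hp01 : ∀ i j, 0 ≤ p i j ∧ p i j ≤ 1 := by
    intro i j
    obtain ⟨hnn, hsum⟩ := hp i
    refine ⟨hnn j, ?_⟩
    calc p i j ≤ ∑ k, p i k :=
          Finset.single_le_sum (fun k _ => hnn k) (Finset.mem_univ j)
      _ = 1 := hsum
  have hprod0 : ∀ (A : Finset (Fin n)) j, 0 ≤ ∏ i ∈ A, (1 - p i j) := fun A j =>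
    Finset.prod_nonneg fun i _ => by linarith [(hp01 i j).2]
  have hprod1 : ∀ (A : Finset (Fin n)) j, ∏ i ∈ A, (1 - p i j) ≤ 1 := fun A j =>
    Finset.prod_le_one (fun i _ => by linarith [(hp01 i j).2])
      (fun i _ => by linarith [(hp01 i j).1])
  have hlampos : ∀ W : Finset (Fin n), W.Nonempty → 0 < lamQ lam W := fun W hW =>
    Finset.sum_pos (fun i _ => (hlam i).1) hW
  -- submodularity of alpha
  have hsub : alphaQ p μ (S ∪ T) S' + alphaQ p μ (S ∩ T) S'
      ≤ alphaQ p μ S S' + alphaQ p μ T S' := by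
    unfold alphaQ
    rw [← Finset.sum_add_distrib, ← Finset.sum_add_distrib]
    apply Finset.sum_le_sum
    intro j _
    have c0 : 0 ≤ μ j * ∏ i ∈ S', (1 - p i j) :=
      mul_nonneg (hmu j).1 (hprod0 S' j)
    have hu : ∏ i ∈ S ∪ T, (1 - p i j)
        = (∏ i ∈ S, (1 - p i j)) * ∏ i ∈ T \ S, (1 - p i j) := by
      rw [← Finset.union_sdiff_self_eq_union]
      exact Finset.prod_union Finset.disjoint_sdiff
    have hb : ∏ i ∈ T, (1 - p i j)
        = (∏ i ∈ T \ S, (1 - p i j)) * ∏ i ∈ S ∩ T, (1 - p i j) := by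
      have h := Finset.prod_union (f := fun i => 1 - p i j)
        (Finset.disjoint_sdiff_inter T S)
      rw [Finset.sdiff_union_inter] at h
      rw [h, Finset.inter_comm T S]
    have ha : ∏ i ∈ S, (1 - p i j)
        = (∏ i ∈ S \ T, (1 - p i j)) * ∏ i ∈ S ∩ T, (1 - p i j) := by
      have h := Finset.prod_union (f := fun i => 1 - p i j)
        (Finset.disjoint_sdiff_inter S T)
      rw [Finset.sdiff_union_inter] at h
      rw [h]
    have hav : ∏ i ∈ S, (1 - p i j) ≤ ∏ i ∈ S ∩ T, (1 - p i j) := by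
      rw [ha]
      exact mul_le_of_le_one_left (hprod0 _ j) (hprod1 _ j)
    have key : (1 - ∏ i ∈ S ∪ T, (1 - p i j)) + (1 - ∏ i ∈ S ∩ T, (1 - p i j))
        ≤ (1 - ∏ i ∈ S, (1 - p i j)) + (1 - ∏ i ∈ T, (1 - p i j)) := by
      rw [hu, hb]
      nlinarith [hprod1 (T \ S) j, hprod0 (T \ S) j, hav]
    nlinarith [mul_nonneg c0 (sub_nonneg.mpr key)]
  -- lambda is modular
  have hlammod : lamQ lam (S ∪ T) + lamQ lam (S ∩ T) = lamQ lam S + lamQ lam T :=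
    Finset.sum_union_inter
  set F := fQ p μ lam S S' with hF
  have hUd : Disjoint (S ∪ T) S' := Finset.disjoint_union_left.mpr ⟨hSd, hTd⟩
  have hUne : (S ∪ T).Nonempty := hSne.mono Finset.subset_union_left
  have hId : Disjoint (S ∩ T) S' := hSd.mono_left Finset.inter_subset_left
  have hFT : fQ p μ lam T S' = F :=
    le_antisymm (hTmin S hSne hSd) (hSmin T hTne hTd)
  have hαS : alphaQ p μ S S' = F * lamQ lam S := by
    rw [hF]; unfold fQ
    exact (div_mul_cancel₀ _ (hlampos S hSne).ne').symm
  have hαT : alphaQ p μ T S' = F * lamQ lam T := by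
    rw [← hFT]; unfold fQ
    exact (div_mul_cancel₀ _ (hlampos T hTne).ne').symm
  have hαU : F * lamQ lam (S ∪ T) ≤ alphaQ p μ (S ∪ T) S' := by
    have h := hSmin (S ∪ T) hUne hUd
    unfold fQ at h
    exact (le_div_iff₀ (hlampos _ hUne)).mp h
  have hαI : F * lamQ lam (S ∩ T) ≤ alphaQ p μ (S ∩ T) S' := by
    rcases (S ∩ T).eq_empty_or_nonempty with he | hne
    · rw [he]
      simp [alphaQ, lamQ]
    · have h := hSmin (S ∩ T) hne hId
      unfold fQ at h
      exact (le_div_iff₀ (hlampos _ hne)).mp h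
  have hlin : F * lamQ lam (S ∪ T) + F * lamQ lam (S ∩ T)
      = F * lamQ lam S + F * lamQ lam T := by
    rw [← mul_add, ← mul_add, hlammod]
  constructor
  · intro W hWne hWd
    have hU : fQ p μ lam (S ∪ T) S' ≤ F := by
      unfold fQ
      rw [div_le_iff₀ (hlampos _ hUne)]
      linarith
    exact hU.trans (hSmin W hWne hWd)
  · intro hne W hWne hWd
    have hI : fQ p μ lam (S ∩ T) S' ≤ F := by
      unfold fQ
      rw [div_le_iff₀ (hlampos _ hne)]
      linarith
    exact hI.trans (hSmin W hWne hWd)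
end

section
/- Fix a strategy profile p, service rates μ, and arrival rates λ with all λ_i > 0. Let S* be the largest-cardinality minimizer of f(· | p, μ, λ, ∅) over all nonempty subsets of [n] (i.e., the union of all minimizers). Then for every nonempty subset T ⊆ [n] \ S*, f(T | p, μ, λ, S*) > f(S* | p, μ, λ, ∅). -/
open Finset

/-- **Everything outside the top group is strictly slower (Lemma 3.3 ingredient).**
Let `S* = unionMin p μ lam [n] ∅` be the largest-cardinality minimizer of `f(· | p)` over
nonempty subsets of `[n]` (the union of all minimizers). Then every nonempty
`T ⊆ [n] \ S*` satisfies `f(T | S*) > f(S* | ∅)`. -/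
theorem statement7 {n m : ℕ} (hn : 1 ≤ n) (hm : 1 ≤ m)
    (lam : Fin n → ℝ) (μ : Fin m → ℝ) (p : Fin n → Fin m → ℝ)
    (hlam : ∀ i, 0 < lam i ∧ lam i < 1) (hmu : ∀ j, 0 ≤ μ j ∧ μ j ≤ 1)
    (hp : ∀ i, inSimplex (p i)) :
    ∀ T : Finset (Fin n), T.Nonempty → Disjoint T (unionMin p μ lam Finset.univ ∅) →
      fQ p μ lam (unionMin p μ lam Finset.univ ∅) ∅ <
        fQ p μ lam T (unionMin p μ lam Finset.univ ∅) := by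
  classical
  -- basic bounds
  have hp01 : ∀ i j, 0 ≤ p i j ∧ p i j ≤ 1 := by
    intro i j
    refine ⟨(hp i).1 j, ?_⟩
    calc p i j ≤ ∑ k, p i k :=
          Finset.single_le_sum (fun k _ => (hp i).1 k) (Finset.mem_univ j)
      _ = 1 := (hp i).2
  have hprod0 : ∀ (S : Finset (Fin n)) j, 0 ≤ ∏ i ∈ S, (1 - p i j) :=
    fun S j => Finset.prod_nonneg fun i _ => by linarith [(hp01 i j).2]
  have hprod1 : ∀ (S : Finset (Fin n)) j, ∏ i ∈ S, (1 - p i j) ≤ 1 :=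
    fun S j => Finset.prod_le_one (fun i _ => by linarith [(hp01 i j).2])
      (fun i _ => by linarith [(hp01 i j).1])
  have hlamp : ∀ S : Finset (Fin n), S.Nonempty → 0 < lamQ lam S := by
    intro S hS
    exact Finset.sum_pos (fun i _ => (hlam i).1) hS
  -- alpha facts
  have halpha_split : ∀ S T : Finset (Fin n), Disjoint S T →
      alphaQ p μ (S ∪ T) ∅ = alphaQ p μ S ∅ + alphaQ p μ T S := by
    intro S T hd
    unfold alphaQ
    rw [← Finset.sum_add_distrib]
    refine Finset.sum_congr rfl fun j _ => ?_
    rw [Finset.prod_union hd]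
    simp only [Finset.prod_empty]
    ring
  have halpha_submod : ∀ S T : Finset (Fin n),
      alphaQ p μ (S ∪ T) ∅ + alphaQ p μ (S ∩ T) ∅ ≤ alphaQ p μ S ∅ + alphaQ p μ T ∅ := by
    intro S T
    unfold alphaQ
    rw [← Finset.sum_add_distrib, ← Finset.sum_add_distrib]
    refine Finset.sum_le_sum fun j _ => ?_
    simp only [Finset.prod_empty, mul_one]
    have pS : (∏ i ∈ S \ T, (1 - p i j)) * (∏ i ∈ S ∩ T, (1 - p i j))
        = ∏ i ∈ S, (1 - p i j) := by
      rw [← Finset.prod_union (Finset.disjoint_sdiff_inter S T), Finset.sdiff_union_inter]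
    have pT : (∏ i ∈ T \ S, (1 - p i j)) * (∏ i ∈ S ∩ T, (1 - p i j))
        = ∏ i ∈ T, (1 - p i j) := by
      rw [Finset.inter_comm, ← Finset.prod_union (Finset.disjoint_sdiff_inter T S),
        Finset.sdiff_union_inter]
    have pU : (∏ i ∈ S \ T, (1 - p i j)) *
        ((∏ i ∈ T \ S, (1 - p i j)) * (∏ i ∈ S ∩ T, (1 - p i j)))
        = ∏ i ∈ S ∪ T, (1 - p i j) := by
      rw [pT, ← Finset.prod_union Finset.sdiff_disjoint, Finset.sdiff_union_self_eq_union]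
    rw [← pS, ← pT, ← pU]
    have hx := hprod1 (S \ T) j
    have hy := hprod1 (T \ S) j
    have hc := hprod0 (S ∩ T) j
    nlinarith [mul_nonneg (hmu j).1 (mul_nonneg hc
      (mul_nonneg (sub_nonneg.2 hx) (sub_nonneg.2 hy)))]
  -- a minimizer exists
  obtain ⟨S0, hS0mem, hS0min⟩ :=
    Finset.exists_min_image
      ((Finset.univ : Finset (Fin n)).powerset.filter Finset.Nonempty)
      (fun S => fQ p μ lam S ∅)
      ⟨{⟨0, hn⟩}, by simp⟩
  obtain ⟨hS0pow, hS0ne⟩ := Finset.mem_filter.1 hS0mem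
  set fstar := fQ p μ lam S0 ∅ with hfstar
  have hfmin : ∀ T : Finset (Fin n), T.Nonempty → fstar ≤ fQ p μ lam T ∅ := by
    intro T hT
    exact hS0min T (Finset.mem_filter.2 ⟨Finset.mem_powerset.2 (Finset.subset_univ T), hT⟩)
  set K := unionMin p μ lam Finset.univ ∅ with hK
  -- the excess function h S = α(S) - f* λ(S)
  have hEmpty : alphaQ p μ (∅ : Finset (Fin n)) ∅ - fstar * lamQ lam ∅ = 0 := by
    simp [alphaQ, lamQ]
  have hnonneg : ∀ S : Finset (Fin n), 0 ≤ alphaQ p μ S ∅ - fstar * lamQ lam S := by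
    intro S
    rcases S.eq_empty_or_nonempty with rfl | hS
    · linarith [hEmpty]
    · have hlp := hlamp S hS
      have h1 : fstar ≤ alphaQ p μ S ∅ / lamQ lam S := hfmin S hS
      have h2 := (le_div_iff₀ hlp).1 h1
      linarith
  have hzero_of : ∀ S : Finset (Fin n), S.Nonempty → fQ p μ lam S ∅ = fstar →
      alphaQ p μ S ∅ - fstar * lamQ lam S = 0 := by
    intro S hS hf
    have hlp := (hlamp S hS).ne'
    have : alphaQ p μ S ∅ = fstar * lamQ lam S := by
      rw [← hf]
      unfold fQ
      field_simp
    linarith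
  have hf_of_zero : ∀ S : Finset (Fin n), S.Nonempty →
      alphaQ p μ S ∅ - fstar * lamQ lam S = 0 → fQ p μ lam S ∅ = fstar := by
    intro S hS h0
    have hlp := (hlamp S hS).ne'
    unfold fQ
    rw [div_eq_iff hlp]
    linarith
  have hsubm : ∀ S T : Finset (Fin n),
      (alphaQ p μ (S ∪ T) ∅ - fstar * lamQ lam (S ∪ T)) +
        (alphaQ p μ (S ∩ T) ∅ - fstar * lamQ lam (S ∩ T)) ≤
      (alphaQ p μ S ∅ - fstar * lamQ lam S) + (alphaQ p μ T ∅ - fstar * lamQ lam T) := by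
    intro S T
    have hmod : lamQ lam (S ∪ T) + lamQ lam (S ∩ T) = lamQ lam S + lamQ lam T := by
      unfold lamQ
      exact Finset.sum_union_inter
    have hmod' : fstar * lamQ lam (S ∪ T) + fstar * lamQ lam (S ∩ T) =
        fstar * lamQ lam S + fstar * lamQ lam T := by
      rw [← mul_add, ← mul_add, hmod]
    have := halpha_submod S T
    linarith
  -- every minimizer is contained in K
  have hsubK : ∀ S : Finset (Fin n),
      (S.Nonempty ∧ ∀ T ∈ (Finset.univ : Finset (Fin n)).powerset, T.Nonempty →
        fQ p μ lam S ∅ ≤ fQ p μ lam T ∅) → S ⊆ K := by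
    intro S hS
    rw [hK]
    unfold unionMin
    have h2 := Finset.le_sup (s := (Finset.univ : Finset (Fin n)).powerset)
      (f := fun S => if S.Nonempty ∧ ∀ T ∈ (Finset.univ : Finset (Fin n)).powerset,
        T.Nonempty → fQ p μ lam S ∅ ≤ fQ p μ lam T ∅ then S else ∅)
      (Finset.mem_powerset.2 (Finset.subset_univ S))
    exact le_trans (le_of_eq (if_pos hS).symm) h2
  -- K has zero excess
  have hKzero : alphaQ p μ K ∅ - fstar * lamQ lam K = 0 := by
    rw [hK]
    unfold unionMin
    refine Finset.sup_induction (p := fun X => alphaQ p μ X ∅ - fstar * lamQ lam X = 0) ?_ ?_ ?_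
    · exact hEmpty
    · intro A hA B hB
      rw [Finset.sup_eq_union]
      linarith [hsubm A B, hnonneg (A ∪ B), hnonneg (A ∩ B)]
    · intro S hSmem
      split_ifs with hc
      · obtain ⟨hSne, hSminp⟩ := hc
        have h1 : fQ p μ lam S ∅ ≤ fstar := hSminp S0 hS0pow hS0ne
        have h2 : fstar ≤ fQ p μ lam S ∅ := hfmin S hSne
        exact hzero_of S hSne (le_antisymm h1 h2)
      · exact hEmpty
  -- K is nonempty
  have hKne : K.Nonempty := by
    have hs : S0 ⊆ K := hsubK S0 ⟨hS0ne, fun T _ hT => hfmin T hT⟩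
    exact hS0ne.mono hs
  have hfK : fQ p μ lam K ∅ = fstar := hf_of_zero K hKne hKzero
  -- main argument
  intro T hT hdis
  have hdis' : Disjoint K T := hdis.symm
  have hlamT := hlamp T hT
  have hKTne : (K ∪ T).Nonempty := hKne.mono Finset.subset_union_left
  -- strict positivity of the excess of K ∪ T
  have hpos : 0 < alphaQ p μ (K ∪ T) ∅ - fstar * lamQ lam (K ∪ T) := by
    rcases (hnonneg (K ∪ T)).lt_or_eq with hlt | heq
    · exact hlt
    · exfalso
      have hfKT : fQ p μ lam (K ∪ T) ∅ = fstar := hf_of_zero (K ∪ T) hKTne heq.symm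
      have hsub : K ∪ T ⊆ K := by
        refine hsubK (K ∪ T) ⟨hKTne, fun T' _ hT' => ?_⟩
        rw [hfKT]
        exact hfmin T' hT'
      obtain ⟨t, ht⟩ := hT
      exact Finset.disjoint_left.1 hdis ht (hsub (Finset.mem_union_right K ht))
  -- compute f(T | K)
  have e2 : lamQ lam (K ∪ T) = lamQ lam K + lamQ lam T := by
    unfold lamQ
    exact Finset.sum_union hdis'
  have e1 : alphaQ p μ (K ∪ T) ∅ = alphaQ p μ K ∅ + alphaQ p μ T K :=
    halpha_split K T hdis'
  have hα : alphaQ p μ T K =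
      (alphaQ p μ (K ∪ T) ∅ - fstar * lamQ lam (K ∪ T)) + fstar * lamQ lam T := by
    rw [e1, e2] at *
    linarith [hKzero]
  have hfT : fQ p μ lam T K =
      (alphaQ p μ (K ∪ T) ∅ - fstar * lamQ lam (K ∪ T)) / lamQ lam T + fstar := by
    unfold fQ
    rw [hα]
    field_simp
  rw [hfK, hfT]
  have := div_pos hpos hlamT
  linarith
end

section
/- For every strategy profile p and every k ≥ 1 such that both S_k and S_{k+1} are output by the rate algorithm, g_k > g_{k+1}. Equivalently, the common aging rates of the successive groups S_1, S_2, … output by the algorithm are strictly decreasing. -/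
open Finset

section AuxMono

variable {n m : ℕ} {p : Fin n → Fin m → ℝ} {μ : Fin m → ℝ} {lam : Fin n → ℝ}

lemma one_sub_p_nonneg (hp : ∀ i, inSimplex (p i)) (i : Fin n) (j : Fin m) :
    0 ≤ 1 - p i j := by
  have h2 := (hp i).2
  have h3 := Finset.single_le_sum (f := p i) (fun j' _ => (hp i).1 j') (Finset.mem_univ j)
  linarith

lemma prodP_nonneg (hp : ∀ i, inSimplex (p i)) (S : Finset (Fin n)) (j : Fin m) :
    0 ≤ ∏ i ∈ S, (1 - p i j) :=
  Finset.prod_nonneg fun i _ => one_sub_p_nonneg hp i j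

lemma prodP_le_one (hp : ∀ i, inSimplex (p i)) (S : Finset (Fin n)) (j : Fin m) :
    ∏ i ∈ S, (1 - p i j) ≤ 1 :=
  Finset.prod_le_one (fun i _ => one_sub_p_nonneg hp i j)
    (fun i _ => by have := (hp i).1 j; linarith)

lemma lamQ_pos (hlam : ∀ i, 0 < lam i) {S : Finset (Fin n)} (hS : S.Nonempty) :
    0 < lamQ lam S :=
  Finset.sum_pos (fun i _ => hlam i) hS

lemma alphaQ_union {S T : Finset (Fin n)} (hd : Disjoint S T) :
    alphaQ p μ (S ∪ T) ∅ =
      alphaQ p μ S ∅ + alphaQ p (fun j => μ j * ∏ r ∈ S, (1 - p r j)) T ∅ := by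
  simp only [alphaQ, Finset.prod_empty, mul_one, ← Finset.sum_add_distrib]
  refine Finset.sum_congr rfl fun j _ => ?_
  rw [Finset.prod_union hd]
  ring

lemma alphaQ_submod (hμ : ∀ j, 0 ≤ μ j) (hp : ∀ i, inSimplex (p i)) (A B : Finset (Fin n)) :
    alphaQ p μ (A ∪ B) ∅ + alphaQ p μ (A ∩ B) ∅ ≤ alphaQ p μ A ∅ + alphaQ p μ B ∅ := by
  simp only [alphaQ, Finset.prod_empty, mul_one, ← Finset.sum_add_distrib]
  refine Finset.sum_le_sum fun j _ => ?_
  have hU : ∏ i ∈ A ∪ B, (1 - p i j) = (∏ i ∈ A, (1 - p i j)) * ∏ i ∈ B \ A, (1 - p i j) := by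
    rw [← Finset.prod_union sdiff_disjoint.symm, Finset.union_sdiff_self_eq_union]
  have hB : ∏ i ∈ B, (1 - p i j) = (∏ i ∈ A ∩ B, (1 - p i j)) * ∏ i ∈ B \ A, (1 - p i j) := by
    rw [Finset.inter_comm, Finset.prod_inter_mul_prod_diff]
  have hA : ∏ i ∈ A, (1 - p i j) = (∏ i ∈ A ∩ B, (1 - p i j)) * ∏ i ∈ A \ B, (1 - p i j) :=
    (Finset.prod_inter_mul_prod_diff A B _).symm
  have hv : 0 ≤ ∏ i ∈ A ∩ B, (1 - p i j) := prodP_nonneg hp _ j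
  have hx : ∏ i ∈ A \ B, (1 - p i j) ≤ 1 := prodP_le_one hp _ j
  have hx0 : 0 ≤ ∏ i ∈ A \ B, (1 - p i j) := prodP_nonneg hp _ j
  have hw : ∏ i ∈ B \ A, (1 - p i j) ≤ 1 := prodP_le_one hp _ j
  have hw0 : 0 ≤ ∏ i ∈ B \ A, (1 - p i j) := prodP_nonneg hp _ j
  have hμj := hμ j
  rw [hU, hB, hA]
  nlinarith [mul_nonneg (mul_nonneg hμj hv)
      (mul_nonneg (by linarith : (0:ℝ) ≤ 1 - ∏ i ∈ A \ B, (1 - p i j))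
        (by linarith : (0:ℝ) ≤ 1 - ∏ i ∈ B \ A, (1 - p i j)))]

/-- `S` is a minimizer of `f(· | ∅)` among nonempty subsets of `I`. -/
def MinzrP {n m : ℕ} (p : Fin n → Fin m → ℝ) (μ : Fin m → ℝ) (lam : Fin n → ℝ)
    (I S : Finset (Fin n)) : Prop :=
  S ⊆ I ∧ S.Nonempty ∧ ∀ T ∈ I.powerset, T.Nonempty → fQ p μ lam S ∅ ≤ fQ p μ lam T ∅

lemma exists_minzr {I : Finset (Fin n)} (hI : I.Nonempty) : ∃ S, MinzrP p μ lam I S := by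
  classical
  obtain ⟨S, hS, hmin⟩ := Finset.exists_min_image (I.powerset.filter Finset.Nonempty)
    (fun S => fQ p μ lam S ∅) ⟨I, by simp [hI]⟩
  rw [Finset.mem_filter, Finset.mem_powerset] at hS
  exact ⟨S, hS.1, hS.2, fun T hT hTne => hmin T (by
    rw [Finset.mem_filter]; exact ⟨hT, hTne⟩)⟩

lemma minzr_union (hμ : ∀ j, 0 ≤ μ j) (hp : ∀ i, inSimplex (p i)) (hlam : ∀ i, 0 < lam i)
    {I A B : Finset (Fin n)} (hA : MinzrP p μ lam I A) (hB : MinzrP p μ lam I B) :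
    MinzrP p μ lam I (A ∪ B) := by
  obtain ⟨hAI, hAne, hAmin⟩ := hA
  obtain ⟨hBI, hBne, hBmin⟩ := hB
  have hABI : A ∪ B ⊆ I := Finset.union_subset hAI hBI
  have hABne : (A ∪ B).Nonempty := hAne.mono Finset.subset_union_left
  have hlamA := lamQ_pos hlam hAne
  have hlamB := lamQ_pos hlam hBne
  have hlamAB := lamQ_pos hlam hABne
  set fs := fQ p μ lam A ∅ with hfs
  have hfB : fQ p μ lam B ∅ = fs :=
    le_antisymm (hBmin A (Finset.mem_powerset.2 hAI) hAne)
      (hAmin B (Finset.mem_powerset.2 hBI) hBne)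
  have hαA : alphaQ p μ A ∅ = fs * lamQ lam A := by
    rw [hfs]; unfold fQ; field_simp
  have hαB : alphaQ p μ B ∅ = fs * lamQ lam B := by
    rw [← hfB]; unfold fQ; field_simp
  have hαI : fs * lamQ lam (A ∩ B) ≤ alphaQ p μ (A ∩ B) ∅ := by
    rcases (A ∩ B).eq_empty_or_nonempty with h | h
    · simp [h, alphaQ, lamQ]
    · have h1 := hAmin (A ∩ B)
        (Finset.mem_powerset.2 ((Finset.inter_subset_left).trans hAI)) h
      rw [hfs] at h1 ⊢
      exact (le_div_iff₀ (lamQ_pos hlam h)).1 h1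
  have hsub := alphaQ_submod hμ hp A B
  have hlamUI : lamQ lam (A ∪ B) + lamQ lam (A ∩ B) = lamQ lam A + lamQ lam B :=
    Finset.sum_union_inter
  have hkey : fQ p μ lam (A ∪ B) ∅ ≤ fs := by
    have h5 : fs * lamQ lam (A ∪ B) + fs * lamQ lam (A ∩ B) =
        fs * lamQ lam A + fs * lamQ lam B := by
      rw [← mul_add, ← mul_add, hlamUI]
    unfold fQ
    rw [div_le_iff₀ hlamAB]
    linarith
  exact ⟨hABI, hABne, fun T hT hTne => hkey.trans (hAmin T hT hTne)⟩

open scoped Classical in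
lemma subset_unionMin {I S : Finset (Fin n)} (hS : MinzrP p μ lam I S) :
    S ⊆ unionMin p μ lam I ∅ := by
  have hmem : S ∈ I.powerset := Finset.mem_powerset.2 hS.1
  have h := Finset.le_sup (f := fun S =>
    if S.Nonempty ∧ ∀ T ∈ I.powerset, T.Nonempty → fQ p μ lam S ∅ ≤ fQ p μ lam T ∅ then S
    else ∅) hmem
  have h2 : S ≤ unionMin p μ lam I ∅ := by
    unfold unionMin
    exact le_trans (le_of_eq (if_pos ⟨hS.2.1, hS.2.2⟩).symm) h
  exact h2

open scoped Classical in
lemma unionMin_minzr (hμ : ∀ j, 0 ≤ μ j) (hp : ∀ i, inSimplex (p i)) (hlam : ∀ i, 0 < lam i)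
    {I : Finset (Fin n)} (hI : I.Nonempty) :
    MinzrP p μ lam I (unionMin p μ lam I ∅) := by
  obtain ⟨S₀, hS₀⟩ := exists_minzr (p := p) (μ := μ) (lam := lam) hI
  have hle : S₀ ⊆ unionMin p μ lam I ∅ := subset_unionMin hS₀
  have hP : unionMin p μ lam I ∅ = ∅ ∨ MinzrP p μ lam I (unionMin p μ lam I ∅) := by
    unfold unionMin
    refine Finset.sup_induction (p := fun s => s = ∅ ∨ MinzrP p μ lam I s) (Or.inl rfl) ?_ ?_
    · rintro a (rfl | ha) b (rfl | hb)
      · left; simp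
      · right; simpa using hb
      · right; simpa using ha
      · right; exact minzr_union hμ hp hlam ha hb
    · intro b hb
      split_ifs with h
      · exact Or.inr ⟨Finset.mem_powerset.1 hb, h.1, h.2⟩
      · exact Or.inl rfl
  rcases hP with h | h
  · exact absurd (h ▸ hle) (by simp [Finset.subset_empty, hS₀.2.1.ne_empty])
  · exact h

open scoped Classical in
lemma fQ_lt_union (hμ : ∀ j, 0 ≤ μ j) (hp : ∀ i, inSimplex (p i)) (hlam : ∀ i, 0 < lam i)
    {I T : Finset (Fin n)} (hI : I.Nonempty) (hT : T.Nonempty)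
    (hTsub : T ⊆ I \ unionMin p μ lam I ∅) :
    fQ p μ lam (unionMin p μ lam I ∅) ∅ < fQ p μ lam (unionMin p μ lam I ∅ ∪ T) ∅ := by
  set U := unionMin p μ lam I ∅ with hUdef
  have hU := unionMin_minzr hμ hp hlam hI (p := p) (μ := μ) (lam := lam)
  rw [← hUdef] at hU
  have hTI : T ⊆ I := hTsub.trans Finset.sdiff_subset
  have hUT : U ∪ T ⊆ I := Finset.union_subset hU.1 hTI
  have hle : fQ p μ lam U ∅ ≤ fQ p μ lam (U ∪ T) ∅ :=
    hU.2.2 _ (Finset.mem_powerset.2 hUT) (hU.2.1.mono Finset.subset_union_left)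
  rcases hle.lt_or_eq with h | h
  · exact h
  · exfalso
    have hm : MinzrP p μ lam I (U ∪ T) :=
      ⟨hUT, hU.2.1.mono Finset.subset_union_left,
        fun T' hT' hT'ne => h ▸ hU.2.2 T' hT' hT'ne⟩
    have hsub := subset_unionMin hm
    obtain ⟨t, ht⟩ := hT
    have h1 : t ∈ U := hsub (Finset.subset_union_right ht)
    have h2 := hTsub ht
    rw [Finset.mem_sdiff] at h2
    exact h2.2 h1

lemma mediant {a b c d : ℝ} (hc : 0 < c) (hd : 0 < d) (h : a / c < (a + b) / (c + d)) :
    a / c < b / d := by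
  rw [div_lt_div_iff₀ hc (by linarith)] at h
  rw [div_lt_div_iff₀ hc hd]
  nlinarith

lemma stateQ_mu_nonneg (hmu : ∀ j, 0 ≤ μ j) (hp : ∀ i, inSimplex (p i)) (k : ℕ) :
    ∀ j, 0 ≤ (stateQ lam μ p k).2 j := by
  induction k with
  | zero => exact hmu
  | succ k ih =>
    intro j
    simp only [stateQ]
    exact mul_nonneg (ih j) (prodP_nonneg hp _ j)

end AuxMono

/-- **Monotonicity (Lemma 3.3).** If the rate algorithm outputs both the group `S_{k+1}`
(i.e. steps `0, …, k` are all non-terminal: some nonempty subset of the remaining queues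
has `f`-value `< 1`) and the group `S_{k+2}` (i.e. the set of remaining queues after step
`k` is nonempty), then the successive group rates satisfy `g_{k+1} > g_{k+2}`. -/
theorem statement9 {n m : ℕ} (hn : 1 ≤ n) (hm : 1 ≤ m)
    (lam : Fin n → ℝ) (μ : Fin m → ℝ) (p : Fin n → Fin m → ℝ)
    (hlam : ∀ i, 0 < lam i ∧ lam i < 1) (hmu : ∀ j, 0 ≤ μ j ∧ μ j ≤ 1)
    (hp : ∀ i, inSimplex (p i)) (k : ℕ)
    (hprev : ∀ j ≤ k, ∃ S ∈ (stateQ lam μ p j).1.powerset, S.Nonempty ∧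
      fQ p (stateQ lam μ p j).2 lam S ∅ < 1)
    (hk1 : (stateQ lam μ p (k + 1)).1.Nonempty) :
    gQ lam μ p (k + 1) < gQ lam μ p k := by
  classical
  have hlam' : ∀ i, 0 < lam i := fun i => (hlam i).1
  set I := (stateQ lam μ p k).1 with hIdef
  set μc := (stateQ lam μ p k).2 with hμcdef
  have hμc0 : ∀ j, 0 ≤ μc j := stateQ_mu_nonneg (fun j => (hmu j).1) hp k
  set S := topSet p μc lam I with hSdef
  have hI1 : (stateQ lam μ p (k + 1)).1 = I \ S := by
    rw [hSdef, hIdef, hμcdef]; rfl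
  have hμ1 : (stateQ lam μ p (k + 1)).2 = fun j => μc j * ∏ r ∈ S, (1 - p r j) := by
    rw [hSdef, hIdef, hμcdef]; rfl
  set μn : Fin m → ℝ := fun j => μc j * ∏ r ∈ S, (1 - p r j) with hμndef
  have hμn0 : ∀ j, 0 ≤ μn j := fun j => mul_nonneg (hμc0 j) (prodP_nonneg hp _ j)
  have hI2ne : (I \ S).Nonempty := by rwa [hI1] at hk1
  have hIne : I.Nonempty := hI2ne.mono Finset.sdiff_subset
  have hSmin : MinzrP p μc lam I S := unionMin_minzr hμc0 hp hlam' hIne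
  set T := topSet p μn lam (I \ S) with hTdef
  have hTmin : MinzrP p μn lam (I \ S) T := unionMin_minzr hμn0 hp hlam' hI2ne
  -- f_k < 1
  obtain ⟨S₀, hS₀mem, hS₀ne, hS₀lt⟩ := hprev k le_rfl
  have hfslt : fQ p μc lam S ∅ < 1 :=
    lt_of_le_of_lt (hSmin.2.2 S₀ hS₀mem hS₀ne) hS₀lt
  -- strict increase of f
  have hdisj : Disjoint S T := by
    have := hTmin.1
    exact Finset.disjoint_left.2 fun a haS haT =>
      (Finset.mem_sdiff.1 (this haT)).2 haS
  have hstrict : fQ p μc lam S ∅ < fQ p μc lam (S ∪ T) ∅ :=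
    fQ_lt_union hμc0 hp hlam' hIne hTmin.2.1 hTmin.1
  have hdec : alphaQ p μc (S ∪ T) ∅ = alphaQ p μc S ∅ + alphaQ p μn T ∅ :=
    alphaQ_union hdisj
  have hlamU : lamQ lam (S ∪ T) = lamQ lam S + lamQ lam T := Finset.sum_union hdisj
  have hmed : fQ p μc lam S ∅ < fQ p μn lam T ∅ := by
    have h := hstrict
    unfold fQ at h ⊢
    rw [hdec, hlamU] at h
    exact mediant (lamQ_pos hlam' hSmin.2.1) (lamQ_pos hlam' hTmin.2.1) h
  -- conclude
  have hgk : gQ lam μ p k = 1 - fQ p μc lam S ∅ := by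
    unfold gQ
    rw [← hμcdef, ← hIdef, ← hSdef]
    exact max_eq_right (by linarith)
  have hgk1 : gQ lam μ p (k + 1) = max 0 (1 - fQ p μn lam T ∅) := by
    unfold gQ
    rw [hI1, hμ1]
  rw [hgk, hgk1]
  exact max_lt (by linarith) (by linarith)
end

section
/- The function r : (Δ^{m−1})^n → [0,1]^n, p ↦ (r_1(p), …, r_n(p)), defined by the rate algorithm, is continuous. -/
open Finset

set_option linter.unusedSectionVars false
set_option linter.unnecessarySimpa false
namespace Stmt10

variable {n m : ℕ}

/-- discounted remaining-service α: `A C S = Σ_j μ_j ∏_{r∈C}(1-p_{rj}) (1-∏_{i∈S}(1-p_{ij}))`. -/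
noncomputable def A (μ : Fin m → ℝ) (p : Fin n → Fin m → ℝ) (C S : Finset (Fin n)) : ℝ :=
  ∑ j, μ j * (∏ r ∈ C, (1 - p r j)) * (1 - ∏ i ∈ S, (1 - p i j))

def lamS (lam : Fin n → ℝ) (S : Finset (Fin n)) : ℝ := ∑ i ∈ S, lam i

noncomputable def F (lam : Fin n → ℝ) (μ : Fin m → ℝ) (p : Fin n → Fin m → ℝ)
    (C S : Finset (Fin n)) : ℝ := A μ p C S / lamS lam S

section Bounds

variable {lam : Fin n → ℝ} {μ : Fin m → ℝ} {p : Fin n → Fin m → ℝ}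
  (hp : ∀ i j, 0 ≤ p i j ∧ p i j ≤ 1) (hμ : ∀ j, 0 ≤ μ j) (hlam : ∀ i, 0 < lam i)

include hp in
lemma prodq_nonneg (X : Finset (Fin n)) (j : Fin m) : 0 ≤ ∏ r ∈ X, (1 - p r j) :=
  Finset.prod_nonneg fun r _ => by linarith [(hp r j).2]

include hp in
lemma prodq_le_one (X : Finset (Fin n)) (j : Fin m) : ∏ r ∈ X, (1 - p r j) ≤ 1 :=
  Finset.prod_le_one (fun r _ => by linarith [(hp r j).2]) (fun r _ => by linarith [(hp r j).1])

include hp in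
lemma prodq_mono {X Y : Finset (Fin n)} (hXY : X ⊆ Y) (j : Fin m) :
    ∏ r ∈ Y, (1 - p r j) ≤ ∏ r ∈ X, (1 - p r j) := by
  rw [← Finset.prod_sdiff hXY]
  calc (∏ r ∈ Y \ X, (1 - p r j)) * ∏ r ∈ X, (1 - p r j)
      ≤ 1 * ∏ r ∈ X, (1 - p r j) := by
        apply mul_le_mul_of_nonneg_right (prodq_le_one hp _ j) (prodq_nonneg hp _ j)
    _ = _ := one_mul _

include hp hμ in
lemma A_nonneg (C S : Finset (Fin n)) : 0 ≤ A μ p C S := by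
  apply Finset.sum_nonneg
  intro j _
  have h1 := prodq_nonneg hp C j
  have h2 := prodq_le_one hp S j
  exact mul_nonneg (mul_nonneg (hμ j) h1) (by linarith)

include hp hμ in
lemma A_mono_contr {C C' : Finset (Fin n)} (h : C ⊆ C') (S : Finset (Fin n)) :
    A μ p C' S ≤ A μ p C S := by
  apply Finset.sum_le_sum
  intro j _
  have h1 := prodq_mono hp h j
  have h2 := prodq_le_one hp S j
  exact mul_le_mul_of_nonneg_right (mul_le_mul_of_nonneg_left h1 (hμ j)) (by linarith)

lemma A_add {C S T : Finset (Fin n)} (hCS : Disjoint C S) (hST : Disjoint S T) :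
    A μ p C (S ∪ T) = A μ p C S + A μ p (C ∪ S) T := by
  unfold A
  rw [← Finset.sum_add_distrib]
  apply Finset.sum_congr rfl
  intro j _
  rw [Finset.prod_union hST, Finset.prod_union hCS]
  ring

include hp hμ in
lemma A_submod (C X Y : Finset (Fin n)) :
    A μ p C (X ∪ Y) + A μ p C (X ∩ Y) ≤ A μ p C X + A μ p C Y := by
  unfold A
  rw [← Finset.sum_add_distrib, ← Finset.sum_add_distrib]
  apply Finset.sum_le_sum
  intro j _
  have hX : ∏ r ∈ X, (1 - p r j) = (∏ r ∈ X ∩ Y, (1 - p r j)) * ∏ r ∈ X \ Y, (1 - p r j) :=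
    (Finset.prod_inter_mul_prod_diff X Y _).symm
  have hY : ∏ r ∈ Y, (1 - p r j) = (∏ r ∈ X ∩ Y, (1 - p r j)) * ∏ r ∈ Y \ X, (1 - p r j) := by
    rw [Finset.inter_comm]
    exact (Finset.prod_inter_mul_prod_diff Y X _).symm
  have hXY : ∏ r ∈ X ∪ Y, (1 - p r j)
      = ((∏ r ∈ X ∩ Y, (1 - p r j)) * ∏ r ∈ X \ Y, (1 - p r j)) * ∏ r ∈ Y \ X, (1 - p r j) := by
    rw [← hX, ← Finset.prod_union Finset.disjoint_sdiff, Finset.union_sdiff_self_eq_union]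
  set a := ∏ r ∈ X ∩ Y, (1 - p r j)
  set b := ∏ r ∈ X \ Y, (1 - p r j)
  set c := ∏ r ∈ Y \ X, (1 - p r j)
  have ha : 0 ≤ a := prodq_nonneg hp _ j
  have hb0 : 0 ≤ b := prodq_nonneg hp _ j
  have hc0 : 0 ≤ c := prodq_nonneg hp _ j
  have hb1 : b ≤ 1 := prodq_le_one hp _ j
  have hc1 : c ≤ 1 := prodq_le_one hp _ j
  have hP : 0 ≤ μ j * ∏ r ∈ C, (1 - p r j) := mul_nonneg (hμ j) (prodq_nonneg hp C j)
  rw [hX, hY, hXY]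
  nlinarith [mul_nonneg (mul_nonneg (mul_nonneg hP ha) (by linarith : (0:ℝ) ≤ 1 - b))
    (by linarith : (0:ℝ) ≤ 1 - c)]

include hlam in
lemma lamS_pos {S : Finset (Fin n)} (hS : S.Nonempty) : 0 < lamS lam S :=
  Finset.sum_pos (fun i _ => hlam i) hS

include hlam in
lemma lamS_nonneg (S : Finset (Fin n)) : 0 ≤ lamS lam S :=
  Finset.sum_nonneg fun i _ => (hlam i).le

lemma lamS_union {S T : Finset (Fin n)} (h : Disjoint S T) :
    lamS lam (S ∪ T) = lamS lam S + lamS lam T := Finset.sum_union h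

end Bounds

section Key

variable {lam : Fin n → ℝ} {μ : Fin m → ℝ} {p : Fin n → Fin m → ℝ}
  (hp : ∀ i j, 0 ≤ p i j ∧ p i j ≤ 1) (hμ : ∀ j, 0 ≤ μ j) (hlam : ∀ i, 0 < lam i)

/-- inner index set for the minimax formula -/
def innerI (i : Fin n) (D : Finset (Fin n)) : Finset (Finset (Fin n)) :=
  insert {i} (D.powerset.filter (fun S => i ∈ S))

lemma innerI_nonempty (i : Fin n) (D : Finset (Fin n)) : (innerI i D).Nonempty :=
  ⟨{i}, Finset.mem_insert_self _ _⟩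

lemma innerI_eq {i : Fin n} {D : Finset (Fin n)} (hi : i ∈ D) :
    innerI i D = D.powerset.filter (fun S => i ∈ S) := by
  apply Finset.insert_eq_self.2
  simp [Finset.mem_powerset, Finset.singleton_subset_iff, hi]

lemma mem_innerI {i : Fin n} {D S : Finset (Fin n)} (hi : i ∈ D) :
    S ∈ innerI i D ↔ i ∈ S ∧ S ⊆ D := by
  rw [innerI_eq hi, Finset.mem_filter, Finset.mem_powerset, and_comm]

/-- the minimax value `h_i` relative to remaining set `I` -/
noncomputable def hVal (lam : Fin n → ℝ) (μ : Fin m → ℝ) (p : Fin n → Fin m → ℝ)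
    (I : Finset (Fin n)) (i : Fin n) : ℝ :=
  ((I \ {i}).powerset).sup' (Finset.powerset_nonempty _) fun W =>
    (innerI i (I \ W)).inf' (innerI_nonempty i _) fun S => F lam μ p (Iᶜ ∪ W) S

include hp hμ hlam in
/-- K1: `α(T\W | Iᶜ∪W) ≤ t·λ(T\W)` for the union-of-minimizers `T`. -/
lemma K1 {I T : Finset (Fin n)} {t : ℝ} (hTI : T ⊆ I)
    (ht : ∀ S ⊆ I, t * lamS lam S ≤ A μ p Iᶜ S) (hT : A μ p Iᶜ T = t * lamS lam T)
    (W : Finset (Fin n)) : A μ p (Iᶜ ∪ W) (T \ W) ≤ t * lamS lam (T \ W) := by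
  have hsub : Iᶜ ∪ (T ∩ W) ⊆ Iᶜ ∪ W :=
    Finset.union_subset_union_right Finset.inter_subset_right
  have h1 : A μ p (Iᶜ ∪ W) (T \ W) ≤ A μ p (Iᶜ ∪ (T ∩ W)) (T \ W) :=
    A_mono_contr hp hμ hsub _
  have hdisj1 : Disjoint (Iᶜ : Finset (Fin n)) (T ∩ W) :=
    Finset.disjoint_left.2 fun x hx hx2 => (Finset.mem_compl.1 hx) (hTI (Finset.mem_of_mem_inter_left hx2))
  have hdisj2 : Disjoint (T ∩ W) (T \ W) :=
    Finset.disjoint_left.2 fun x hx hx2 => (Finset.mem_sdiff.1 hx2).2 (Finset.mem_of_mem_inter_right hx)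
  have hTsplit : (T ∩ W) ∪ (T \ W) = T := by ext x; simp; tauto
  have h2 : A μ p Iᶜ ((T ∩ W) ∪ (T \ W)) = A μ p Iᶜ (T ∩ W) + A μ p (Iᶜ ∪ (T ∩ W)) (T \ W) :=
    A_add hdisj1 hdisj2
  rw [hTsplit] at h2
  have h3 : t * lamS lam (T ∩ W) ≤ A μ p Iᶜ (T ∩ W) :=
    ht _ (fun x hx => hTI (Finset.mem_of_mem_inter_left hx))
  have hlsplit : lamS lam (T ∩ W) + lamS lam (T \ W) = lamS lam T := by
    rw [← lamS_union hdisj2, hTsplit]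
  have h5 : t * lamS lam (T ∩ W) + t * lamS lam (T \ W) = t * lamS lam T := by
    rw [← mul_add, hlsplit]
  linarith [h1, h2, h3]

include hp hμ in
/-- K2: after contracting the minimizer `T`, all values stay ≥ t. -/
lemma K2 {I T : Finset (Fin n)} {t : ℝ} (hTI : T ⊆ I)
    (ht : ∀ S ⊆ I, t * lamS lam S ≤ A μ p Iᶜ S) (hT : A μ p Iᶜ T = t * lamS lam T)
    {S : Finset (Fin n)} (hS : S ⊆ I \ T) : t * lamS lam S ≤ A μ p (Iᶜ ∪ T) S := by
  have hdisjTS : Disjoint T S :=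
    Finset.disjoint_left.2 fun x hx hx2 => (Finset.mem_sdiff.1 (hS hx2)).2 hx
  have hdisjCT : Disjoint (Iᶜ : Finset (Fin n)) T :=
    Finset.disjoint_left.2 fun x hx hx2 => (Finset.mem_compl.1 hx) (hTI hx2)
  have h2 : A μ p Iᶜ (T ∪ S) = A μ p Iᶜ T + A μ p (Iᶜ ∪ T) S := A_add hdisjCT hdisjTS
  have h3 : t * lamS lam (T ∪ S) ≤ A μ p Iᶜ (T ∪ S) :=
    ht _ (Finset.union_subset hTI (hS.trans (Finset.sdiff_subset)))
  have h4 : lamS lam (T ∪ S) = lamS lam T + lamS lam S := lamS_union hdisjTS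
  have h5 : t * (lamS lam T + lamS lam S) = t * lamS lam T + t * lamS lam S := mul_add _ _ _
  rw [h4] at h3
  linarith [h2, h3]

end Key
section Key2

variable {lam : Fin n → ℝ} {μ : Fin m → ℝ} {p : Fin n → Fin m → ℝ}
  (hp : ∀ i j, 0 ≤ p i j ∧ p i j ≤ 1) (hμ : ∀ j, 0 ≤ μ j) (hlam : ∀ i, 0 < lam i)

include hp hμ hlam in
/-- K3: the key exchange inequality for dropping the first group. -/
lemma K3 {I T : Finset (Fin n)} {t : ℝ} (hTI : T ⊆ I)
    (ht : ∀ S ⊆ I, t * lamS lam S ≤ A μ p Iᶜ S) (hT : A μ p Iᶜ T = t * lamS lam T)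
    {W S : Finset (Fin n)} (hSne : S.Nonempty) (hSsub : S ⊆ I \ (W ∪ T)) :
    F lam μ p (Iᶜ ∪ W) ((T \ W) ∪ S) ≤ max t (F lam μ p (Iᶜ ∪ T ∪ W) S) := by
  have hdisj1 : Disjoint (Iᶜ ∪ W) (T \ W) := by
    rw [Finset.disjoint_union_left]
    constructor
    · exact Finset.disjoint_left.2 fun x hx hx2 =>
        (Finset.mem_compl.1 hx) (hTI (Finset.mem_sdiff.1 hx2).1)
    · exact Finset.disjoint_left.2 fun x hx hx2 => (Finset.mem_sdiff.1 hx2).2 hx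
  have hdisj2 : Disjoint (T \ W) S := Finset.disjoint_left.2 fun x hx hx2 => by
    have := Finset.mem_sdiff.1 (hSsub hx2)
    exact this.2 (Finset.mem_union_right _ (Finset.mem_sdiff.1 hx).1)
  have hadd : A μ p (Iᶜ ∪ W) ((T \ W) ∪ S)
      = A μ p (Iᶜ ∪ W) (T \ W) + A μ p ((Iᶜ ∪ W) ∪ (T \ W)) S := A_add hdisj1 hdisj2
  have hCeq : (Iᶜ ∪ W) ∪ (T \ W) = Iᶜ ∪ T ∪ W := by ext x; simp; tauto
  rw [hCeq] at hadd
  have hk1 : A μ p (Iᶜ ∪ W) (T \ W) ≤ t * lamS lam (T \ W) := K1 hp hμ hlam hTI ht hT W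
  have hlamS : 0 < lamS lam S := lamS_pos hlam hSne
  have hvS : A μ p (Iᶜ ∪ T ∪ W) S = F lam μ p (Iᶜ ∪ T ∪ W) S * lamS lam S :=
    (div_mul_cancel₀ _ hlamS.ne').symm
  have hlamU : lamS lam ((T \ W) ∪ S) = lamS lam (T \ W) + lamS lam S := lamS_union hdisj2
  have hlamTW : 0 ≤ lamS lam (T \ W) := lamS_nonneg hlam _
  set v := F lam μ p (Iᶜ ∪ T ∪ W) S with hv
  have hbound : A μ p (Iᶜ ∪ W) ((T \ W) ∪ S) ≤ max t v * lamS lam ((T \ W) ∪ S) := by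
    rw [hlamU, mul_add]
    have h1 : t * lamS lam (T \ W) ≤ max t v * lamS lam (T \ W) :=
      mul_le_mul_of_nonneg_right (le_max_left _ _) hlamTW
    have h2 : v * lamS lam S ≤ max t v * lamS lam S :=
      mul_le_mul_of_nonneg_right (le_max_right _ _) hlamS.le
    rw [hadd, hvS]
    linarith
  have hlamU0 : 0 < lamS lam ((T \ W) ∪ S) := by rw [hlamU]; linarith
  rw [F, div_le_iff₀ hlamU0]
  exact hbound

end Key2
section Top

variable {lam : Fin n → ℝ} {μ : Fin m → ℝ} {p : Fin n → Fin m → ℝ}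
  (hp : ∀ i j, 0 ≤ p i j ∧ p i j ≤ 1) (hμ : ∀ j, 0 ≤ μ j) (hlam : ∀ i, 0 < lam i)

lemma lamS_eq_lamQ (S : Finset (Fin n)) : lamQ lam S = lamS lam S := rfl

lemma A_empty (C : Finset (Fin n)) : A μ p C ∅ = 0 := by simp [A]

lemma fQ_eq (C S : Finset (Fin n)) :
    fQ p (fun j => μ j * ∏ r ∈ C, (1 - p r j)) lam S ∅ = F lam μ p C S := by
  simp only [fQ, alphaQ, F, A, lamQ, lamS, Finset.prod_empty, mul_one]

include hp hμ hlam in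
/-- Properties of the top set (union of all minimizers). -/
lemma top_props {I : Finset (Fin n)} (hI : I.Nonempty) :
    ∃ t : ℝ,
      (∀ S ⊆ I, t * lamS lam S ≤ A μ p Iᶜ S) ∧
      (topSet p (fun j => μ j * ∏ r ∈ Iᶜ, (1 - p r j)) lam I).Nonempty ∧
      topSet p (fun j => μ j * ∏ r ∈ Iᶜ, (1 - p r j)) lam I ⊆ I ∧
      A μ p Iᶜ (topSet p (fun j => μ j * ∏ r ∈ Iᶜ, (1 - p r j)) lam I)
        = t * lamS lam (topSet p (fun j => μ j * ∏ r ∈ Iᶜ, (1 - p r j)) lam I) ∧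
      (∃ S₀ : Finset (Fin n), S₀.Nonempty ∧ S₀ ⊆ I ∧ F lam μ p Iᶜ S₀ = t) := by
  classical
  obtain ⟨S₀, hS₀mem, hS₀min⟩ := Finset.exists_min_image
    (I.powerset.filter Finset.Nonempty) (fun S => F lam μ p Iᶜ S)
    ⟨I, by simp [Finset.mem_filter, hI]⟩
  rw [Finset.mem_filter, Finset.mem_powerset] at hS₀mem
  obtain ⟨hS₀I, hS₀ne⟩ := hS₀mem
  set t := F lam μ p Iᶜ S₀ with htdef
  have hmin : ∀ T' ⊆ I, T'.Nonempty → t ≤ F lam μ p Iᶜ T' := by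
    intro T' hT'I hT'ne
    exact hS₀min T' (by simp [Finset.mem_filter, Finset.mem_powerset, hT'I, hT'ne])
  have ht : ∀ S ⊆ I, t * lamS lam S ≤ A μ p Iᶜ S := by
    intro S hSI
    rcases S.eq_empty_or_nonempty with rfl | hSne
    · simp [A_empty, lamS]
    · have h := hmin S hSI hSne
      rw [F, le_div_iff₀ (lamS_pos hlam hSne)] at h
      exact h
  refine ⟨t, ht, ?_⟩
  set μc := fun j => μ j * ∏ r ∈ Iᶜ, (1 - p r j) with hμc
  set T := topSet p μc lam I with hTdef
  have hcondS₀ : S₀.Nonempty ∧ ∀ T' ∈ I.powerset, T'.Nonempty →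
      fQ p μc lam S₀ ∅ ≤ fQ p μc lam T' ∅ := by
    refine ⟨hS₀ne, fun T' hT' hT'ne => ?_⟩
    rw [hμc, fQ_eq, fQ_eq]
    exact hmin T' (Finset.mem_powerset.1 hT') hT'ne
  have hS₀T : S₀ ⊆ T := by
    have h1 := Finset.le_sup (f := fun S => if S.Nonempty ∧ ∀ T' ∈ I.powerset, T'.Nonempty →
        fQ p μc lam S ∅ ≤ fQ p μc lam T' ∅ then S else ∅)
      (Finset.mem_powerset.2 hS₀I)
    have h2 : S₀ ≤ (I.powerset.sup fun S => if S.Nonempty ∧ ∀ T' ∈ I.powerset, T'.Nonempty →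
        fQ p μc lam S ∅ ≤ fQ p μc lam T' ∅ then S else ∅) :=
      le_trans (le_of_eq (if_pos hcondS₀).symm) h1
    exact h2
  have hTI : T ⊆ I := by
    have h2 : (I.powerset.sup fun S => if S.Nonempty ∧ ∀ T' ∈ I.powerset, T'.Nonempty →
        fQ p μc lam S ∅ ≤ fQ p μc lam T' ∅ then S else ∅) ≤ I := by
      apply Finset.sup_le
      intro S hS
      split_ifs
      · exact Finset.mem_powerset.1 hS
      · exact Finset.empty_subset _
    exact h2
  have hTub : T ⊆ I ∧ A μ p Iᶜ T ≤ t * lamS lam T := by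
    apply Finset.sup_induction (p := fun X => X ⊆ I ∧ A μ p Iᶜ X ≤ t * lamS lam X)
    · simp [A_empty, lamS]
    · rintro X ⟨hXI, hXA⟩ Y ⟨hYI, hYA⟩
      simp only [Finset.sup_eq_union]
      refine ⟨Finset.union_subset hXI hYI, ?_⟩
      have hsub := A_submod hp hμ (Iᶜ) X Y
      have hint : t * lamS lam (X ∩ Y) ≤ A μ p Iᶜ (X ∩ Y) :=
        ht _ (fun x hx => hXI (Finset.mem_of_mem_inter_left hx))
      have hlsum : lamS lam (X ∪ Y) + lamS lam (X ∩ Y) = lamS lam X + lamS lam Y :=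
        Finset.sum_union_inter
      have hmul : t * lamS lam (X ∪ Y) + t * lamS lam (X ∩ Y)
          = t * lamS lam X + t * lamS lam Y := by rw [← mul_add, ← mul_add, hlsum]
      linarith
    · intro S hS
      split_ifs with hcond
      · refine ⟨Finset.mem_powerset.1 hS, ?_⟩
        have h := hcond.2 S₀ (Finset.mem_powerset.2 hS₀I) hS₀ne
        rw [hμc, fQ_eq, fQ_eq] at h
        rw [F, div_le_iff₀ (lamS_pos hlam hcond.1)] at h
        calc A μ p Iᶜ S ≤ F lam μ p Iᶜ S₀ * lamS lam S := h
          _ = t * lamS lam S := by rw [htdef]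
      · simpa [A_empty, lamS] using ⟨Finset.empty_subset I, le_refl (0:ℝ)⟩
  have hTne : T.Nonempty := hS₀ne.mono hS₀T
  exact ⟨hTne, hTI, le_antisymm hTub.2 (ht T hTI), S₀, hS₀ne, hS₀I, rfl⟩

end Top
section HVal

variable {lam : Fin n → ℝ} {μ : Fin m → ℝ} {p : Fin n → Fin m → ℝ}
  (hp : ∀ i j, 0 ≤ p i j ∧ p i j ≤ 1) (hμ : ∀ j, 0 ≤ μ j) (hlam : ∀ i, 0 < lam i)

lemma hVal_le {I : Finset (Fin n)} {i : Fin n} (hi : i ∈ I) {c : ℝ}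
    (h : ∀ W ⊆ I \ {i}, ∃ S, i ∈ S ∧ S ⊆ I \ W ∧ F lam μ p (Iᶜ ∪ W) S ≤ c) :
    hVal lam μ p I i ≤ c := by
  apply Finset.sup'_le
  intro W hW
  rw [Finset.mem_powerset] at hW
  obtain ⟨S, hiS, hSsub, hFle⟩ := h W hW
  have hiD : i ∈ I \ W := Finset.mem_sdiff.2 ⟨hi, fun hc => (Finset.mem_sdiff.1 (hW hc)).2
    (Finset.mem_singleton_self i)⟩
  exact le_trans (Finset.inf'_le _ ((mem_innerI hiD).2 ⟨hiS, hSsub⟩)) hFle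

lemma hVal_ge {I : Finset (Fin n)} {i : Fin n} (hi : i ∈ I) {c : ℝ} {W : Finset (Fin n)}
    (hW : W ⊆ I \ {i}) (h : ∀ S, i ∈ S → S ⊆ I \ W → c ≤ F lam μ p (Iᶜ ∪ W) S) :
    c ≤ hVal lam μ p I i := by
  have hiD : i ∈ I \ W := Finset.mem_sdiff.2 ⟨hi, fun hc => (Finset.mem_sdiff.1 (hW hc)).2
    (Finset.mem_singleton_self i)⟩
  refine le_trans ?_ (Finset.le_sup' _ (Finset.mem_powerset.2 hW))
  apply Finset.le_inf'
  intro S hS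
  rw [mem_innerI hiD] at hS
  exact h S hS.1 hS.2

include hp hμ hlam in
/-- Dropping the first (top) group does not change `hVal` for surviving queues. -/
lemma hVal_drop {I T : Finset (Fin n)} {t : ℝ} {i : Fin n} (hi : i ∈ I) (hiT : i ∉ T)
    (hTne : T.Nonempty) (hTI : T ⊆ I)
    (ht : ∀ S ⊆ I, t * lamS lam S ≤ A μ p Iᶜ S) (hT : A μ p Iᶜ T = t * lamS lam T) :
    hVal lam μ p I i = hVal lam μ p (I \ T) i := by
  have hi' : i ∈ I \ T := Finset.mem_sdiff.2 ⟨hi, hiT⟩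
  have hcompl : ((I \ T)ᶜ : Finset (Fin n)) = Iᶜ ∪ T := by ext x; simp; tauto
  -- t is a lower bound for hVal (I \ T) i
  have htle : t ≤ hVal lam μ p (I \ T) i := by
    apply hVal_ge hi' (Finset.empty_subset _)
    intro S hiS hSsub
    rw [Finset.sdiff_empty] at hSsub
    have h2 := K2 hp hμ hTI ht hT hSsub
    rw [F, le_div_iff₀ (lamS_pos hlam ⟨i, hiS⟩), hcompl, Finset.union_empty]
    exact h2
  apply le_antisymm
  · -- every W-term of hVal I i is ≤ hVal (I\T) i
    apply hVal_le hi
    intro W hW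
    -- pick the minimizer S* of the (W \ T)-term of hVal (I\T) i
    obtain ⟨Sstar, hSmem, hSeq⟩ := Finset.exists_mem_eq_inf' (innerI_nonempty i ((I \ T) \ (W \ T)))
      (fun S => F lam μ p ((I \ T)ᶜ ∪ (W \ T)) S)
    have hiD : i ∈ (I \ T) \ (W \ T) := Finset.mem_sdiff.2 ⟨hi', fun hc =>
      (Finset.mem_sdiff.1 (hW (Finset.mem_sdiff.1 hc).1)).2 (Finset.mem_singleton_self i)⟩
    rw [mem_innerI hiD] at hSmem
    obtain ⟨hiS, hSsub⟩ := hSmem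
    have hWT : W \ T ⊆ (I \ T) \ {i} := by
      intro x hx
      have h1 := hW (Finset.mem_sdiff.1 hx).1
      simp only [Finset.mem_sdiff, Finset.mem_singleton] at h1 ⊢
      exact ⟨⟨h1.1, (Finset.mem_sdiff.1 hx).2⟩, h1.2⟩
    have hterm : F lam μ p ((I \ T)ᶜ ∪ (W \ T)) Sstar ≤ hVal lam μ p (I \ T) i := by
      rw [← hSeq]
      exact Finset.le_sup' (fun W0 => (innerI i ((I \ T) \ W0)).inf' (innerI_nonempty i _)
        fun S => F lam μ p ((I \ T)ᶜ ∪ W0) S) (Finset.mem_powerset.2 hWT)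
    have hSsub' : Sstar ⊆ I \ (W ∪ T) := by
      intro x hx
      have := hSsub hx
      simp only [Finset.mem_sdiff, Finset.mem_union] at this ⊢
      tauto
    have hk3 := K3 hp hμ hlam hTI ht hT ⟨i, hiS⟩ hSsub'
    have hCeq2 : ((I \ T)ᶜ ∪ (W \ T) : Finset (Fin n)) = Iᶜ ∪ T ∪ W := by ext x; simp; tauto
    rw [hCeq2] at hterm
    refine ⟨(T \ W) ∪ Sstar, Finset.mem_union_right _ hiS, ?_, ?_⟩
    · apply Finset.union_subset
      · intro x hx
        simp only [Finset.mem_sdiff] at hx ⊢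
        exact ⟨hTI hx.1, hx.2⟩
      · intro x hx
        have := hSsub' hx
        simp only [Finset.mem_sdiff, Finset.mem_union] at this ⊢
        tauto
    · exact le_trans hk3 (max_le htle hterm)
  · -- hVal (I\T) i ≤ hVal I i
    apply Finset.sup'_le
    intro W' hW'
    rw [Finset.mem_powerset] at hW'
    have hWsub : T ∪ W' ⊆ I \ {i} := by
      apply Finset.union_subset
      · intro x hx
        simp only [Finset.mem_sdiff, Finset.mem_singleton]
        exact ⟨hTI hx, fun hc => hiT (hc ▸ hx)⟩
      · intro x hx
        have := hW' hx
        simp only [Finset.mem_sdiff, Finset.mem_singleton] at this ⊢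
        exact ⟨this.1.1, this.2⟩
    have hDeq : I \ (T ∪ W') = (I \ T) \ W' := by ext x; simp; tauto
    have hCeq : (Iᶜ ∪ (T ∪ W') : Finset (Fin n)) = (I \ T)ᶜ ∪ W' := by ext x; simp; tauto
    refine le_trans ?_ (Finset.le_sup' (fun W0 => (innerI i (I \ W0)).inf' (innerI_nonempty i _)
      fun S => F lam μ p (Iᶜ ∪ W0) S) (Finset.mem_powerset.2 hWsub))
    apply Finset.le_inf'
    intro S hS
    rw [hDeq] at hS
    calc ((innerI i ((I \ T) \ W')).inf' (innerI_nonempty i _)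
          fun S => F lam μ p ((I \ T)ᶜ ∪ W') S) ≤ F lam μ p ((I \ T)ᶜ ∪ W') S :=
        Finset.inf'_le _ hS
      _ = F lam μ p (Iᶜ ∪ (T ∪ W')) S := by rw [hCeq]
end HVal
section Main

variable {lam : Fin n → ℝ} {μ : Fin m → ℝ} {p : Fin n → Fin m → ℝ}
  (hp : ∀ i j, 0 ≤ p i j ∧ p i j ≤ 1) (hμ : ∀ j, 0 ≤ μ j) (hlam : ∀ i, 0 < lam i)

include hp hμ hlam in
lemma main_ind : ∀ (fuel : ℕ) (I : Finset (Fin n)) (i : Fin n), i ∈ I → I.card ≤ fuel →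
    rateAux lam p fuel I (fun j => μ j * ∏ r ∈ Iᶜ, (1 - p r j)) i
      = max 0 (1 - hVal lam μ p I i) := by
  intro fuel
  induction fuel with
  | zero =>
    intro I i hi hcard
    rw [Nat.le_zero, Finset.card_eq_zero] at hcard
    exact absurd (hcard ▸ hi) (Finset.notMem_empty i)
  | succ fuel ih =>
    intro I i hi hcard
    have hI : I.Nonempty := ⟨i, hi⟩
    rw [rateAux]
    by_cases hb : ∀ S ∈ I.powerset, S.Nonempty →
        1 ≤ fQ p (fun j => μ j * ∏ r ∈ Iᶜ, (1 - p r j)) lam S ∅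
    · rw [if_pos hb]
      have h1 : (1:ℝ) ≤ hVal lam μ p I i := by
        apply hVal_ge hi (Finset.empty_subset _)
        intro S hiS hSsub
        rw [Finset.sdiff_empty] at hSsub
        have := hb S (Finset.mem_powerset.2 hSsub) ⟨i, hiS⟩
        rw [fQ_eq] at this
        rwa [Finset.union_empty]
      rw [max_eq_left (by linarith)]
    · rw [if_neg hb]
      obtain ⟨t, ht, hTne, hTI, hT, S₀, hS₀ne, hS₀I, hS₀F⟩ := top_props hp hμ hlam (lam := lam) hI
      set T := topSet p (fun j => μ j * ∏ r ∈ Iᶜ, (1 - p r j)) lam I with hTdef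
      -- t < 1
      push_neg at hb
      obtain ⟨S₁, hS₁mem, hS₁ne, hS₁lt⟩ := hb
      rw [fQ_eq] at hS₁lt
      have htlt : t < 1 := by
        have h2 : t ≤ F lam μ p Iᶜ S₁ := by
          rw [F, le_div_iff₀ (lamS_pos hlam hS₁ne)]
          exact ht S₁ (Finset.mem_powerset.1 hS₁mem)
        linarith
      by_cases hiT : i ∈ T
      · rw [if_pos hiT]
        have hFT : fQ p (fun j => μ j * ∏ r ∈ Iᶜ, (1 - p r j)) lam T ∅ = t := by
          rw [fQ_eq, F, hT, mul_div_assoc, div_self (lamS_pos hlam hTne).ne', mul_one]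
        rw [hFT]
        have hhv : hVal lam μ p I i = t := by
          apply le_antisymm
          · apply hVal_le hi
            intro W hW
            have hiW : i ∉ W := fun hc => (Finset.mem_sdiff.1 (hW hc)).2 (Finset.mem_singleton_self i)
            refine ⟨T \ W, Finset.mem_sdiff.2 ⟨hiT, hiW⟩, ?_, ?_⟩
            · intro x hx
              simp only [Finset.mem_sdiff] at hx ⊢
              exact ⟨hTI hx.1, hx.2⟩
            · have hk1 := K1 hp hμ hlam hTI ht hT W
              rw [F, div_le_iff₀ (lamS_pos hlam ⟨i, Finset.mem_sdiff.2 ⟨hiT, hiW⟩⟩)]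
              exact hk1
          · apply hVal_ge hi (Finset.empty_subset _)
            intro S hiS hSsub
            rw [Finset.sdiff_empty] at hSsub
            rw [Finset.union_empty, F, le_div_iff₀ (lamS_pos hlam ⟨i, hiS⟩)]
            exact ht S hSsub
        rw [hhv, max_eq_right (by linarith)]
      · rw [if_neg hiT]
        have hi' : i ∈ I \ T := Finset.mem_sdiff.2 ⟨hi, hiT⟩
        have hcompl : ((I \ T)ᶜ : Finset (Fin n)) = Iᶜ ∪ T := by ext x; simp; tauto
        have harg : (fun j => (fun j => μ j * ∏ r ∈ Iᶜ, (1 - p r j)) j * ∏ r ∈ T, (1 - p r j))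
            = fun j => μ j * ∏ r ∈ (I \ T)ᶜ, (1 - p r j) := by
          funext j
          rw [hcompl, Finset.prod_union (Finset.disjoint_left.2 fun x hx hx2 =>
            (Finset.mem_compl.1 hx) (hTI hx2)), mul_assoc]
        have hcard' : (I \ T).card ≤ fuel := by
          have h2 : (I \ T).card < I.card :=
            Finset.card_lt_card (Finset.sdiff_ssubset hTI hTne)
          omega
        rw [harg, ih (I \ T) i hi' hcard', hVal_drop hp hμ hlam hi hiT hTne hTI ht hT]

end Main
section Cont

variable {lam : Fin n → ℝ} {μ : Fin m → ℝ}

lemma cont_F (C S : Finset (Fin n)) :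
    Continuous fun p : Fin n → Fin m → ℝ => F lam μ p C S := by
  apply Continuous.div_const
  apply continuous_finset_sum
  intro j _
  have hprod : ∀ X : Finset (Fin n),
      Continuous fun p : Fin n → Fin m → ℝ => ∏ r ∈ X, (1 - p r j) := by
    intro X
    apply continuous_finset_prod
    intro r _
    exact continuous_const.sub ((continuous_apply j).comp (continuous_apply r))
  exact (continuous_const.mul (hprod C)).mul (continuous_const.sub (hprod S))

lemma cont_hVal (i : Fin n) (I : Finset (Fin n)) :
    Continuous fun p : Fin n → Fin m → ℝ => hVal lam μ p I i := by
  unfold hVal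
  apply Continuous.finset_sup'_apply (Finset.powerset_nonempty _)
  intro W _
  apply Continuous.finset_inf'_apply (innerI_nonempty i _)
  intro S _
  exact cont_F _ _

end Cont

end Stmt10

/-- **Continuity of the rate function (Theorem 3.4).** The function
`p ↦ (r_1(p), …, r_n(p))` is continuous on the product of simplices
`(Δ^{m-1})^n ⊆ ℝ^{n m}` (with the subspace topology). -/
theorem statement10 {n m : ℕ} (hn : 1 ≤ n) (hm : 1 ≤ m)
    (lam : Fin n → ℝ) (μ : Fin m → ℝ)
    (hlam : ∀ i, 0 < lam i ∧ lam i < 1) (hmu : ∀ j, 0 ≤ μ j ∧ μ j ≤ 1) :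
    ContinuousOn (fun p : Fin n → Fin m → ℝ => fun i => rateQ lam μ p i)
      {p : Fin n → Fin m → ℝ | ∀ i, inSimplex (p i)} := by
  apply ContinuousOn.congr
    (f := fun p : Fin n → Fin m → ℝ => fun i => max 0 (1 - Stmt10.hVal lam μ p Finset.univ i))
  · apply Continuous.continuousOn
    apply continuous_pi
    intro i
    exact continuous_const.max (continuous_const.sub (Stmt10.cont_hVal i _))
  · intro p hps
    funext i
    have hp : ∀ i j, 0 ≤ p i j ∧ p i j ≤ 1 := by
      intro i' j
      obtain ⟨h0, h1⟩ := hps i'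
      refine ⟨h0 j, ?_⟩
      calc p i' j ≤ ∑ j', p i' j' := Finset.single_le_sum (fun j' _ => h0 j') (Finset.mem_univ j)
        _ = 1 := h1
    have hμ0 : ∀ j, 0 ≤ μ j := fun j => (hmu j).1
    have hlam0 : ∀ i', 0 < lam i' := fun i' => (hlam i').1
    have hμeq : (fun j => μ j * ∏ r ∈ (Finset.univ : Finset (Fin n))ᶜ, (1 - p r j)) = μ := by
      funext j
      simp
    have hmain := Stmt10.main_ind hp hμ0 hlam0 (n + 1) Finset.univ i (Finset.mem_univ i)
      (by simp)
    rw [hμeq] at hmain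
    exact hmain
end

section
/- Fix a queue i ∈ [n], fixed strategies p_{−i} ∈ (Δ^{m−1})^{n−1} of the other queues, and any two strategies p, p' ∈ Δ^{m−1}. Define h(t) = r_i(t·p + (1−t)·p', p_{−i}) for t ∈ [0,1]. Then h is piecewise linear on [0,1] and has no local maximum in the interior; in particular h is quasiconvex: for all 0 ≤ a ≤ t ≤ b ≤ 1, h(t) ≤ max{h(a), h(b)}. -/
open Finset

/-!
The rate of queue `i` is `max 0 (1 - Θ)`, where `Θ` is the least `θ` for which `i` lies in a
minimizer of the submodular function `S ↦ α(S) - θ λ(S)`: each step of the rate algorithm removes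
the largest minimizer of `α / λ` and thereby contracts `α`, which leaves `Θ` unchanged.

Along the segment, `α(S)` is affine in `t`, and constant when `i ∉ S`. Hence `θ < Θ(t)`, i.e.
"some set avoiding `i` beats every set containing `i`", is a convex condition on `t`: `Θ` is
quasiconcave and the rate quasiconvex. The same strict inequalities make `Θ` continuous. Finally, at
the threshold a minimizer containing `i` ties with a lighter set, so `Θ(t)` is always one of the
finitely many affine functions `(α_t(S) - α_t(T)) / (λ(S) - λ(T))`, and a continuous selection from
finitely many lines is piecewise affine.
-/

namespace QueueRate

open Filter Topology

section Penalized

variable {ι : Type*}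

def penalized (a : Finset ι → ℝ) (w : ι → ℝ) (θ : ℝ) (S : Finset ι) : ℝ :=
  a S - θ * ∑ j ∈ S, w j

def IsPenalizedMin (a : Finset ι → ℝ) (w : ι → ℝ) (I : Finset ι) (θ : ℝ) (S : Finset ι) : Prop :=
  S ⊆ I ∧ ∀ T ⊆ I, penalized a w θ S ≤ penalized a w θ T

def thresholdSet (a : Finset ι → ℝ) (w : ι → ℝ) (I : Finset ι) (i : ι) : Set ℝ :=
  {θ | ∃ S, i ∈ S ∧ IsPenalizedMin a w I θ S}

noncomputable def threshold (a : Finset ι → ℝ) (w : ι → ℝ) (I : Finset ι) (i : ι) : ℝ :=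
  sInf (thresholdSet a w I i)

def IsRatioMin (a : Finset ι → ℝ) (w : ι → ℝ) (I S : Finset ι) : Prop :=
  S.Nonempty ∧ S ⊆ I ∧ ∀ T ⊆ I, T.Nonempty → a S / ∑ j ∈ S, w j ≤ a T / ∑ j ∈ T, w j

variable {a b : Finset ι → ℝ} {w : ι → ℝ} {I S T M S₁ : Finset ι} {i : ι} {θ θ' F c : ℝ}

theorem penalized_empty : penalized a w θ ∅ = a ∅ := by
  simp [penalized]

theorem penalized_eq_sub (θ θ' : ℝ) (S : Finset ι) :
    penalized a w θ' S = penalized a w θ S - (θ' - θ) * ∑ j ∈ S, w j := by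
  unfold penalized; ring

theorem continuous_penalized (S : Finset ι) : Continuous fun θ => penalized a w θ S := by
  unfold penalized; fun_prop

theorem exists_isPenalizedMin (a : Finset ι → ℝ) (w : ι → ℝ) (I : Finset ι) (θ : ℝ) :
    ∃ M, IsPenalizedMin a w I θ M := by
  obtain ⟨M, hM, hmin⟩ := I.powerset.exists_min_image (penalized a w θ) ⟨∅, empty_mem_powerset I⟩
  exact ⟨M, mem_powerset.1 hM, fun T hT => hmin T (mem_powerset.2 hT)⟩

theorem exists_isRatioMin (hI : I.Nonempty) : ∃ S, IsRatioMin a w I S := by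
  obtain ⟨S, hS, hmin⟩ := (I.powerset.filter Finset.Nonempty).exists_min_image
    (fun S => a S / ∑ j ∈ S, w j) ⟨I, mem_filter.2 ⟨mem_powerset_self I, hI⟩⟩
  rw [mem_filter, mem_powerset] at hS
  exact ⟨S, hS.2, hS.1, fun T hT hTne => hmin T (mem_filter.2 ⟨mem_powerset.2 hT, hTne⟩)⟩

theorem IsRatioMin.mul_sum_le (hw : ∀ j, 0 < w j) (hS : IsRatioMin a w I S) (hT : T ⊆ I)
    (hTne : T.Nonempty) : (a S / ∑ j ∈ S, w j) * ∑ j ∈ T, w j ≤ a T :=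
  (le_div_iff₀ (sum_pos (fun j _ => hw j) hTne)).1 (hS.2.2 T hT hTne)

theorem le_of_mem_thresholdSet (h0 : a ∅ = 0) (hw : ∀ j, 0 < w j)
    (hc : ∀ T ⊆ I, T.Nonempty → c * ∑ j ∈ T, w j ≤ a T) (hθ : θ ∈ thresholdSet a w I i) :
    c ≤ θ := by
  obtain ⟨S, hiS, hSI, hS⟩ := hθ
  have h1 := hS ∅ (empty_subset I)
  rw [penalized_empty, h0, penalized] at h1
  exact le_of_mul_le_mul_right (by linarith [hc S hSI ⟨i, hiS⟩])
    (sum_pos (fun j _ => hw j) ⟨i, hiS⟩)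

theorem notMem_thresholdSet_iff : θ ∉ thresholdSet a w I i ↔
    ∃ T ⊆ I, i ∉ T ∧ ∀ S ⊆ I, i ∈ S → penalized a w θ T < penalized a w θ S := by
  constructor
  · intro h
    obtain ⟨M, hM⟩ := exists_isPenalizedMin a w I θ
    have hiM : i ∉ M := fun hiM => h ⟨M, hiM, hM⟩
    refine ⟨M, hM.1, hiM, fun S hS hiS => (hM.2 S hS).lt_of_ne fun heq => h ?_⟩
    exact ⟨S, hiS, hS, fun T hT => heq ▸ hM.2 T hT⟩
  · rintro ⟨T, hT, -, hlt⟩ ⟨S, hiS, hSI, hS⟩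
    exact (hS T hT).not_gt (hlt S hSI hiS)

theorem IsRatioMin.isPenalizedMin (h0 : a ∅ = 0) (hw : ∀ j, 0 < w j) (hS : IsRatioMin a w I S) :
    IsPenalizedMin a w I (a S / ∑ j ∈ S, w j) S := by
  have hself : penalized a w (a S / ∑ j ∈ S, w j) S = 0 := by
    rw [penalized, div_mul_cancel₀ _ (sum_pos (fun j _ => hw j) hS.1).ne', sub_self]
  refine ⟨hS.2.1, fun T hT => ?_⟩
  rw [hself]
  rcases T.eq_empty_or_nonempty with rfl | hTne
  · rw [penalized_empty, h0]
  · unfold penalized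
    linarith [hS.mul_sum_le hw hT hTne]

variable [DecidableEq ι]

def IsSubmodular (a : Finset ι → ℝ) : Prop :=
  ∀ S T, a (S ∪ T) + a (S ∩ T) ≤ a S + a T

structure IsNonnegSubmodular (a : Finset ι → ℝ) : Prop where
  map_empty : a ∅ = 0
  nonneg : ∀ S, 0 ≤ a S
  submodular : IsSubmodular a

theorem penalized_union_add_inter_le (hsub : IsSubmodular a) (θ : ℝ) (S T : Finset ι) :
    penalized a w θ (S ∪ T) + penalized a w θ (S ∩ T) ≤ penalized a w θ S + penalized a w θ T := by
  unfold penalized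
  linear_combination hsub S T - θ * sum_union_inter (s₁ := S) (s₂ := T) (f := w)

theorem IsPenalizedMin.union (hsub : IsSubmodular a) (hS : IsPenalizedMin a w I θ S)
    (hT : IsPenalizedMin a w I θ T) : IsPenalizedMin a w I θ (S ∪ T) := by
  refine ⟨union_subset hS.1 hT.1, fun U hU => ?_⟩
  have := penalized_union_add_inter_le (w := w) hsub θ S T
  have := hS.2 (S ∩ T) (inter_subset_left.trans hS.1)
  have := hT.2 U hU
  linarith

theorem IsPenalizedMin.subset_of_lt (hsub : IsSubmodular a) (hw : ∀ j, 0 < w j)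
    (hS : IsPenalizedMin a w I θ S) (hM : IsPenalizedMin a w I θ' M) (hθ : θ < θ') : S ⊆ M := by
  have hsm := penalized_union_add_inter_le (w := w) hsub θ' S M
  have h1 := hM.2 (S ∪ M) (union_subset hS.1 hM.1)
  have h2 := hS.2 (S ∩ M) (inter_subset_left.trans hS.1)
  rw [penalized_eq_sub θ θ' S, penalized_eq_sub θ θ' (S ∩ M)] at hsm
  have hdiff : (θ' - θ) * ∑ j ∈ S \ M, w j ≤ 0 := by
    linear_combination hsm + h1 + h2 + (θ' - θ) * sum_inter_add_sum_sdiff S M w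
  rw [← sdiff_eq_empty_iff_subset]
  by_contra hne
  exact (mul_pos (sub_pos.2 hθ) (sum_pos (fun j _ => hw j) (nonempty_iff_ne_empty.2 hne))).not_ge
    hdiff

theorem IsPenalizedMin.penalized_union_le (hsub : IsSubmodular a) (hw : ∀ j, 0 ≤ w j)
    (hS₁ : IsPenalizedMin a w I θ S₁) (hθ : θ ≤ θ') :
    penalized a w θ' (S ∪ S₁) ≤ penalized a w θ' S := by
  have h1 := penalized_union_add_inter_le (w := w) hsub θ S S₁
  have h2 := hS₁.2 (S ∩ S₁) (inter_subset_right.trans hS₁.1)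
  have h3 := mul_le_mul_of_nonneg_left
    (sum_le_sum_of_subset_of_nonneg (f := w) (subset_union_left (s₁ := S) (s₂ := S₁))
      fun j _ _ => hw j)
    (sub_nonneg.2 hθ)
  rw [penalized_eq_sub θ θ' (S ∪ S₁), penalized_eq_sub θ θ' S]
  linarith

/-- Above `F`, adding `S₁` to a set never hurts; below `F`, neither side has a minimizer
containing `i`. -/
theorem thresholdSet_eq_of_isPenalizedMin (hsub : IsSubmodular a) (hw : ∀ j, 0 < w j)
    (hS₁ : IsPenalizedMin a w I F S₁) (hi : i ∉ S₁) (hb : ∀ S ⊆ I \ S₁, b S = a (S ∪ S₁) - a S₁) :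
    thresholdSet a w I i = thresholdSet b w (I \ S₁) i := by
  have hpen : ∀ θ, ∀ S ⊆ I \ S₁,
      penalized b w θ S = penalized a w θ (S ∪ S₁) - penalized a w θ S₁ := by
    intro θ S hS
    rw [penalized, penalized, penalized, hb S hS,
      sum_union (sdiff_disjoint.mono_left hS)]
    ring
  have hsdiff : ∀ {T}, T ⊆ I → T \ S₁ ⊆ I \ S₁ := fun hT => sdiff_subset_sdiff hT le_rfl
  ext θ
  constructor
  · rintro ⟨S, hiS, hS⟩
    have hF : F ≤ θ := not_lt.1 fun hlt => hi (hS.subset_of_lt hsub hw hS₁ hlt hiS)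
    refine ⟨S \ S₁, mem_sdiff.2 ⟨hiS, hi⟩, hsdiff hS.1, fun T hT => ?_⟩
    rw [hpen θ _ (hsdiff hS.1), hpen θ T hT, sdiff_union_self_eq_union]
    have := hS₁.penalized_union_le hsub (fun j => (hw j).le) hF (S := S)
    have := hS.2 (T ∪ S₁) (union_subset (hT.trans sdiff_subset) hS₁.1)
    linarith
  · rintro ⟨S, hiS, hSI, hS⟩
    have hSI' : S ∪ S₁ ⊆ I := union_subset (hSI.trans sdiff_subset) hS₁.1
    have hF : F ≤ θ := by
      by_contra! hlt
      have h1 := hS ∅ (empty_subset _)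
      rw [hpen θ S hSI, hpen θ ∅ (empty_subset _), empty_union, penalized_eq_sub F θ,
        penalized_eq_sub F θ S₁] at h1
      have h2 := hS₁.2 _ hSI'
      have hsum := sum_union (f := w) (sdiff_disjoint.mono_left hSI)
      have hpos : 0 < ∑ j ∈ S, w j := sum_pos (fun j _ => hw j) ⟨i, hiS⟩
      nlinarith
    refine ⟨S ∪ S₁, mem_union_left _ hiS, hSI', fun T hT => ?_⟩
    have h1 := hS (T \ S₁) (hsdiff hT)
    rw [hpen θ S hSI, hpen θ _ (hsdiff hT), sdiff_union_self_eq_union] at h1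
    have := hS₁.penalized_union_le hsub (fun j => (hw j).le) hF (S := T)
    linarith

theorem thresholdSet_bddBelow (ha : IsNonnegSubmodular a) (hw : ∀ j, 0 < w j) :
    BddBelow (thresholdSet a w I i) :=
  ⟨0, fun _ hθ => le_of_mem_thresholdSet ha.map_empty hw
    (fun T _ _ => by simpa using ha.nonneg T) hθ⟩

theorem thresholdSet_nonempty (ha : IsNonnegSubmodular a) (hw : ∀ j, 0 < w j) (hi : i ∈ I) :
    (thresholdSet a w I i).Nonempty := by
  obtain ⟨k, -, hk⟩ := exists_min_image I w ⟨i, hi⟩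
  have hθ : 0 ≤ a I / w k := div_nonneg (ha.nonneg I) (hw k).le
  refine ⟨a I / w k, I, hi, Subset.rfl, fun T hT => ?_⟩
  rcases hT.eq_or_ssubset with rfl | hTI
  · exact le_rfl
  obtain ⟨j, hjI, hjT⟩ := exists_of_ssubset hTI
  have hkj : w k ≤ ∑ j ∈ I \ T, w j :=
    (hk j hjI).trans (single_le_sum (fun j _ => (hw j).le) (mem_sdiff.2 ⟨hjI, hjT⟩))
  have h1 := mul_le_mul_of_nonneg_left hkj hθ
  rw [div_mul_cancel₀ _ (hw k).ne'] at h1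
  have h2 := sum_sdiff (f := w) hT
  have h3 := ha.nonneg T
  unfold penalized
  nlinarith

theorem isClosed_thresholdSet : IsClosed (thresholdSet a w I i) := by
  have : thresholdSet a w I i = ⋃ S ∈ I.powerset.filter (i ∈ ·),
      ⋂ T ∈ I.powerset, {θ | penalized a w θ S ≤ penalized a w θ T} := by
    ext θ
    simp only [thresholdSet, IsPenalizedMin, Set.mem_ofPred_eq, Set.mem_iUnion, Set.mem_iInter,
      mem_filter, mem_powerset, exists_prop]
    exact exists_congr fun S => by tauto
  rw [this]
  exact isClosed_biUnion_finset fun S _ => isClosed_biInter fun T _ =>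
    isClosed_le (continuous_penalized S) (continuous_penalized T)

theorem threshold_mem (ha : IsNonnegSubmodular a) (hw : ∀ j, 0 < w j) (hi : i ∈ I) :
    threshold a w I i ∈ thresholdSet a w I i :=
  isClosed_thresholdSet.csInf_mem (thresholdSet_nonempty ha hw hi) (thresholdSet_bddBelow ha hw)

theorem mem_thresholdSet_iff (ha : IsNonnegSubmodular a) (hw : ∀ j, 0 < w j) (hi : i ∈ I) :
    θ ∈ thresholdSet a w I i ↔ threshold a w I i ≤ θ := by
  refine ⟨fun h => csInf_le (thresholdSet_bddBelow ha hw) h, fun hle => ?_⟩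
  obtain ⟨S, hiS, hS⟩ := threshold_mem ha hw hi
  rcases hle.eq_or_lt with heq | hlt
  · exact heq ▸ ⟨S, hiS, hS⟩
  · obtain ⟨M, hM⟩ := exists_isPenalizedMin a w I θ
    exact ⟨M, hS.subset_of_lt ha.submodular hw hM hlt hiS, hM⟩

theorem le_threshold (ha : IsNonnegSubmodular a) (hw : ∀ j, 0 < w j) (hi : i ∈ I)
    (hc : ∀ T ⊆ I, T.Nonempty → c * ∑ j ∈ T, w j ≤ a T) : c ≤ threshold a w I i :=
  le_csInf (thresholdSet_nonempty ha hw hi) fun _ hθ => le_of_mem_thresholdSet ha.map_empty hw hc hθ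

theorem exists_penalized_lt_of_threshold_lt (ha : IsNonnegSubmodular a) (hw : ∀ j, 0 < w j)
    (hi : i ∈ I) (hθ : threshold a w I i < θ) :
    ∃ S ⊆ I, i ∈ S ∧ ∀ T ⊆ I, i ∉ T → penalized a w θ S < penalized a w θ T := by
  obtain ⟨S, hiS, hS⟩ := threshold_mem ha hw hi
  obtain ⟨M, hM⟩ := exists_isPenalizedMin a w I θ
  refine ⟨M, hM.1, hS.subset_of_lt ha.submodular hw hM hθ hiS, fun T hT hiT => ?_⟩
  refine (hM.2 T hT).lt_of_ne fun heq => hiT (hS.subset_of_lt ha.submodular hw ?_ hθ hiS)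
  exact ⟨hT, fun U hU => heq ▸ hM.2 U hU⟩

/-- `S` is a minimizer containing `i`; without a tie with a lighter `T` it would remain a
minimizer slightly below the threshold. -/
theorem exists_tie_at_threshold (ha : IsNonnegSubmodular a) (hw : ∀ j, 0 < w j) (hi : i ∈ I) :
    ∃ S T : Finset ι, ∑ j ∈ T, w j < ∑ j ∈ S, w j ∧
      threshold a w I i * (∑ j ∈ S, w j - ∑ j ∈ T, w j) = a S - a T := by
  set Θ := threshold a w I i
  obtain ⟨S, hiS, hS⟩ := threshold_mem ha hw hi
  by_contra! hne
  have hev : ∀ᶠ θ in 𝓝 Θ, ∀ T ∈ I.powerset, ∑ j ∈ T, w j < ∑ j ∈ S, w j →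
      penalized a w θ S < penalized a w θ T := by
    refine (eventually_all_finset _).2 fun T hT => eventually_imp_distrib_left.2 fun hlt => ?_
    refine (continuous_penalized S).continuousAt.eventually_lt (continuous_penalized T).continuousAt
      ((hS.2 T (mem_powerset.1 hT)).lt_of_ne fun heq => hne S T hlt ?_)
    unfold penalized at heq
    linarith
  obtain ⟨θ, hθ, hθS⟩ := hev.exists_lt
  have hmin : IsPenalizedMin a w I θ S := by
    refine ⟨hS.1, fun T hT => ?_⟩
    rcases lt_or_ge (∑ j ∈ T, w j) (∑ j ∈ S, w j) with hlt | hge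
    · exact (hθS T (mem_powerset.2 hT) hlt).le
    · have := hS.2 T hT
      rw [penalized_eq_sub Θ θ S, penalized_eq_sub Θ θ T]
      nlinarith
  exact hθ.not_ge ((mem_thresholdSet_iff ha hw hi).1 ⟨S, hiS, hmin⟩)

theorem IsRatioMin.union (hsub : IsSubmodular a) (h0 : a ∅ = 0) (hw : ∀ j, 0 < w j)
    (hS : IsRatioMin a w I S) (hT : IsRatioMin a w I T) : IsRatioMin a w I (S ∪ T) := by
  have hF : a T / ∑ j ∈ T, w j = a S / ∑ j ∈ S, w j :=
    le_antisymm (hT.2.2 S hS.2.1 hS.1) (hS.2.2 T hT.2.1 hT.1)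
  have hU := (hS.isPenalizedMin h0 hw).union hsub (hF ▸ hT.isPenalizedMin h0 hw)
  have hUne : (S ∪ T).Nonempty := hS.1.mono subset_union_left
  refine ⟨hUne, hU.1, fun U hUI hUne' => le_trans ?_ (hS.2.2 U hUI hUne')⟩
  have h1 := hU.2 S hS.2.1
  rw [penalized, penalized, div_mul_cancel₀ _ (sum_pos (fun j _ => hw j) hS.1).ne'] at h1
  rw [div_le_iff₀ (sum_pos (fun j _ => hw j) hUne)]
  linarith

theorem IsRatioMin.threshold_eq (ha : IsNonnegSubmodular a) (hw : ∀ j, 0 < w j)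
    (hS : IsRatioMin a w I S) (hiS : i ∈ S) : threshold a w I i = a S / ∑ j ∈ S, w j :=
  le_antisymm (csInf_le (thresholdSet_bddBelow ha hw) ⟨S, hiS, hS.isPenalizedMin ha.map_empty hw⟩)
    (le_threshold ha hw (hS.2.1 hiS) fun _ => hS.mul_sum_le hw)

end Penalized

def IsPiecewiseAffineOn (f : ℝ → ℝ) (x y : ℝ) : Prop :=
  ∃ (N : ℕ) (ts : Fin (N + 1) → ℝ), StrictMono ts ∧ ts 0 = x ∧ ts (Fin.last N) = y ∧
    ∀ k : Fin N, ∃ c d : ℝ, ∀ t ∈ Set.Icc (ts k.castSucc) (ts k.succ), f t = c * t + d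

theorem IsPiecewiseAffineOn.congr {f g : ℝ → ℝ} {x y : ℝ} (hf : IsPiecewiseAffineOn f x y)
    (hfg : Set.EqOn f g (Set.Icc x y)) : IsPiecewiseAffineOn g x y := by
  obtain ⟨N, ts, hts, h0, hN, hk⟩ := hf
  refine ⟨N, ts, hts, h0, hN, fun k => ?_⟩
  obtain ⟨c, d, hcd⟩ := hk k
  refine ⟨c, d, fun t ht => ?_⟩
  have hx : x ≤ ts k.castSucc := h0 ▸ hts.monotone (Fin.zero_le _)
  have hy : ts k.succ ≤ y := hN ▸ hts.monotone (Fin.le_last _)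
  rw [← hfg ⟨hx.trans ht.1, ht.2.trans hy⟩, hcd t ht]

theorem eq_div_of_ne_of_mul_add_eq {φ ψ : ℝ × ℝ} {t : ℝ} (hne : φ ≠ ψ)
    (h : φ.1 * t + φ.2 = ψ.1 * t + ψ.2) : t = (ψ.2 - φ.2) / (φ.1 - ψ.1) := by
  have h1 : φ.1 ≠ ψ.1 := fun h1 => hne (Prod.ext h1 (by rw [h1] at h; linarith))
  rw [eq_div_iff (sub_ne_zero.2 h1)]
  linarith

theorem min_le_of_affine {g : ℝ → ℝ} (hg : ∀ t, g t = (1 - t) * g 0 + t * g 1) {x t y : ℝ}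
    (hxt : x ≤ t) (hty : t ≤ y) : min (g x) (g y) ≤ g t := by
  rw [min_le_iff]
  rcases le_total (g 0) (g 1) with h | h
  · left; rw [hg x, hg t]; nlinarith
  · right; rw [hg y, hg t]; nlinarith

/-- On the closed subintervals, the sets where `f` agrees with the different lines are closed and
pairwise disjoint, so connectedness forces a single line. -/
theorem exists_affine_eqOn_of_forall_mem {f : ℝ → ℝ} {Φ : Finset (ℝ × ℝ)} {x y : ℝ}
    (hxy : x < y) (hf : ContinuousOn f (Set.Icc x y))
    (hΦ : ∀ t ∈ Set.Ioo x y, ∃ φ ∈ Φ, f t = φ.1 * t + φ.2)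
    (hsep : ∀ t ∈ Set.Ioo x y, ∀ φ ∈ Φ, ∀ ψ ∈ Φ, φ.1 * t + φ.2 = ψ.1 * t + ψ.2 → φ = ψ) :
    ∃ c d : ℝ, ∀ t ∈ Set.Icc x y, f t = c * t + d := by
  have ht₀ : (x + y) / 2 ∈ Set.Ioo x y := ⟨by linarith, by linarith⟩
  obtain ⟨φ, hφ, hfφ⟩ := hΦ _ ht₀
  have hIoo : Set.EqOn f (fun t => φ.1 * t + φ.2) (Set.Ioo x y) := by
    intro t₁ ht₁
    have hs : Set.uIcc ((x + y) / 2) t₁ ⊆ Set.Ioo x y := Set.ordConnected_Ioo.uIcc_subset ht₀ ht₁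
    let agree (ψ : ℝ × ℝ) : Set ℝ :=
      Set.uIcc ((x + y) / 2) t₁ ∩ (fun t => f t - (ψ.1 * t + ψ.2)) ⁻¹' {0}
    have hclosed (ψ : ℝ × ℝ) : IsClosed (agree ψ) :=
      ((hf.mono (hs.trans Set.Ioo_subset_Icc_self)).sub (by fun_prop)).preimage_isClosed_of_isClosed
        isClosed_Icc isClosed_singleton
    have hcover : Set.uIcc ((x + y) / 2) t₁ ⊆ agree φ ∪ ⋃ ψ ∈ Φ.erase φ, agree ψ := by
      intro t ht
      obtain ⟨ψ, hψ, hfψ⟩ := hΦ t (hs ht)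
      rcases eq_or_ne ψ φ with rfl | hne
      · exact Or.inl ⟨ht, sub_eq_zero.2 hfψ⟩
      · exact Or.inr (Set.mem_biUnion (mem_erase.2 ⟨hne, hψ⟩) ⟨ht, sub_eq_zero.2 hfψ⟩)
    have hdisj : Set.uIcc ((x + y) / 2) t₁ ∩ (agree φ ∩ ⋃ ψ ∈ Φ.erase φ, agree ψ) = ∅ := by
      refine Set.eq_empty_of_forall_notMem ?_
      rintro t ⟨ht, ⟨-, hφt⟩, hψt⟩
      obtain ⟨ψ, hψ, -, hψt⟩ := Set.mem_iUnion₂.1 hψt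
      obtain ⟨hne, hψ⟩ := mem_erase.1 hψ
      exact hne (hsep t (hs ht) ψ hψ φ hφ (by simp only [Set.mem_preimage,
        Set.mem_singleton_iff, sub_eq_zero] at hφt hψt; rw [← hφt, ← hψt]))
    rcases isPreconnected_iff_subset_of_disjoint_closed.1 isPreconnected_uIcc _ _ (hclosed φ)
      (isClosed_biUnion_finset fun ψ _ => hclosed ψ) hcover hdisj with h | h
    · exact sub_eq_zero.1 (h Set.right_mem_uIcc).2
    · obtain ⟨ψ, hψ, -, hψt⟩ := Set.mem_iUnion₂.1 (h Set.left_mem_uIcc)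
      refine absurd (hsep _ ht₀ ψ (mem_of_mem_erase hψ) φ hφ ?_) (ne_of_mem_erase hψ)
      simp only [Set.mem_preimage, Set.mem_singleton_iff, sub_eq_zero] at hψt
      rw [← hψt, hfφ]
  exact ⟨φ.1, φ.2, hIoo.of_subset_closure hf (by fun_prop) Set.Ioo_subset_Icc_self
    (closure_Ioo hxy.ne).ge⟩

theorem IsPiecewiseAffineOn.of_continuousOn {f : ℝ → ℝ} {Φ : Finset (ℝ × ℝ)} {x y : ℝ}
    (hxy : x ≤ y) (hf : ContinuousOn f (Set.Icc x y))
    (hΦ : ∀ t ∈ Set.Icc x y, ∃ φ ∈ Φ, f t = φ.1 * t + φ.2) : IsPiecewiseAffineOn f x y := by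
  set B : Finset ℝ := insert x (insert y
    (((Φ ×ˢ Φ).image fun φψ => (φψ.2.2 - φψ.1.2) / (φψ.1.1 - φψ.2.1)).filter (· ∈ Set.Ioo x y)))
  have hB : ∀ z ∈ B, z ∈ Set.Icc x y := by
    intro z hz
    simp only [B, mem_insert, mem_filter] at hz
    rcases hz with rfl | rfl | ⟨-, hz⟩
    exacts [⟨le_rfl, hxy⟩, ⟨hxy, le_rfl⟩, Set.Ioo_subset_Icc_self hz]
  have hsep : ∀ t ∈ Set.Icc x y, t ∉ B →
      ∀ φ ∈ Φ, ∀ ψ ∈ Φ, φ.1 * t + φ.2 = ψ.1 * t + ψ.2 → φ = ψ := by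
    intro t ht htB φ hφ ψ hψ heq
    by_contra hne
    refine htB (mem_insert_of_mem (mem_insert_of_mem (mem_filter.2 ⟨mem_image.2
      ⟨(φ, ψ), mem_product.2 ⟨hφ, hψ⟩, (eq_div_of_ne_of_mul_add_eq hne heq).symm⟩, ?_⟩)))
    exact ⟨ht.1.lt_of_ne fun h => htB (h ▸ mem_insert_self _ _),
      ht.2.lt_of_ne fun h => htB (h ▸ mem_insert_of_mem (mem_insert_self _ _))⟩
  obtain ⟨N, hN⟩ : ∃ N, B.card = N + 1 :=
    ⟨B.card - 1, (Nat.sub_add_cancel (card_pos.2 ⟨x, mem_insert_self _ _⟩)).symm⟩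
  refine ⟨N, B.orderEmbOfFin hN, (B.orderEmbOfFin hN).strictMono, ?_, ?_, fun k => ?_⟩
  · refine (orderEmbOfFin_zero hN N.succ_pos).trans ?_
    exact le_antisymm (min'_le _ _ (mem_insert_self _ _)) (le_min' _ _ _ fun z hz => (hB z hz).1)
  · refine (orderEmbOfFin_last hN N.succ_pos).trans ?_
    exact le_antisymm (max'_le _ _ _ fun z hz => (hB z hz).2)
      (le_max' _ _ (mem_insert_of_mem (mem_insert_self _ _)))
  set ts := B.orderEmbOfFin hN
  have hgap : ∀ t ∈ Set.Ioo (ts k.castSucc) (ts k.succ), t ∉ B := by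
    intro t ht htB
    obtain ⟨j, rfl⟩ : t ∈ Set.range ts := by rwa [range_orderEmbOfFin]
    have h1 := ts.lt_iff_lt.1 ht.1
    have h2 := ts.lt_iff_lt.1 ht.2
    rw [Fin.lt_def] at h1 h2
    simp only [Fin.val_castSucc, Fin.val_succ] at h1 h2
    omega
  have hsub : Set.Icc (ts k.castSucc) (ts k.succ) ⊆ Set.Icc x y :=
    Set.Icc_subset_Icc (hB _ (orderEmbOfFin_mem B hN _)).1 (hB _ (orderEmbOfFin_mem B hN _)).2
  exact exists_affine_eqOn_of_forall_mem (ts.strictMono Fin.castSucc_lt_succ) (hf.mono hsub)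
    (fun t ht => hΦ t (hsub (Set.Ioo_subset_Icc_self ht)))
    (fun t ht => hsep t (hsub (Set.Ioo_subset_Icc_self ht)) (hgap t ht))

section Segment

variable {ι : Type*} {a : ℝ → Finset ι → ℝ} {w : ι → ℝ}

theorem penalized_affine (haff : ∀ t S, a t S = (1 - t) * a 0 S + t * a 1 S) (θ t : ℝ)
    (S : Finset ι) :
    penalized (a t) w θ S = (1 - t) * penalized (a 0) w θ S + t * penalized (a 1) w θ S := by
  simp only [penalized]
  rw [haff t S]
  ring

theorem continuous_penalized_of_affine (haff : ∀ t S, a t S = (1 - t) * a 0 S + t * a 1 S)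
    (θ : ℝ) (S : Finset ι) : Continuous fun t => penalized (a t) w θ S := by
  have : (fun t => penalized (a t) w θ S) =
      fun t => (1 - t) * penalized (a 0) w θ S + t * penalized (a 1) w θ S :=
    funext fun t => penalized_affine haff θ t S
  rw [this]
  fun_prop

variable [Fintype ι] [DecidableEq ι] {i : ι}

/-- For `T ∌ i` the penalized value does not depend on `t`, while for `S ∋ i` it is affine in
`t`; so "some `T ∌ i` beats every `S ∋ i`", i.e. `θ < Θ(t)`, is a convex condition on `t`. -/
theorem min_threshold_le_threshold (ha : ∀ t ∈ Set.Icc (0 : ℝ) 1, IsNonnegSubmodular (a t))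
    (haff : ∀ t S, a t S = (1 - t) * a 0 S + t * a 1 S)
    (hconst : ∀ t T, i ∉ T → a t T = a 0 T) (hw : ∀ j, 0 < w j)
    {x t y : ℝ} (hx : 0 ≤ x) (hxt : x ≤ t) (hty : t ≤ y) (hy : y ≤ 1) :
    min (threshold (a x) w univ i) (threshold (a y) w univ i) ≤ threshold (a t) w univ i := by
  have hmem : ∀ s ∈ Set.Icc (0 : ℝ) 1, ∀ θ,
      θ ∈ thresholdSet (a s) w univ i ↔ threshold (a s) w univ i ≤ θ :=
    fun s hs _ => mem_thresholdSet_iff (ha s hs) hw (mem_univ i)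
  set θ := threshold (a t) w univ i
  by_contra! hlt
  rw [lt_min_iff] at hlt
  obtain ⟨Tx, -, hiTx, hTx⟩ :=
    notMem_thresholdSet_iff.1 fun h => hlt.1.not_ge ((hmem x ⟨hx, by linarith⟩ θ).1 h)
  obtain ⟨Ty, -, hiTy, hTy⟩ :=
    notMem_thresholdSet_iff.1 fun h => hlt.2.not_ge ((hmem y ⟨by linarith, hy⟩ θ).1 h)
  have hpen : ∀ s T, i ∉ T → penalized (a s) w θ T = penalized (a 0) w θ T :=
    fun s T hiT => by rw [penalized, penalized, hconst s T hiT]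
  obtain ⟨T, hiT, hTx', hTy'⟩ : ∃ T, i ∉ T ∧ penalized (a 0) w θ T ≤ penalized (a 0) w θ Tx ∧
      penalized (a 0) w θ T ≤ penalized (a 0) w θ Ty := by
    rcases le_total (penalized (a 0) w θ Tx) (penalized (a 0) w θ Ty) with h | h
    exacts [⟨Tx, hiTx, le_rfl, h⟩, ⟨Ty, hiTy, h, le_rfl⟩]
  refine notMem_thresholdSet_iff.2 ⟨T, subset_univ T, hiT, fun S _ hiS => ?_⟩
    ((hmem t ⟨by linarith, by linarith⟩ θ).2 le_rfl)
  have h1 := hTx S (subset_univ S) hiS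
  have h2 := hTy S (subset_univ S) hiS
  rw [hpen x Tx hiTx] at h1
  rw [hpen y Ty hiTy] at h2
  rw [hpen t T hiT]
  calc penalized (a 0) w θ T < min (penalized (a x) w θ S) (penalized (a y) w θ S) :=
        lt_min (by linarith) (by linarith)
    _ ≤ penalized (a t) w θ S :=
        min_le_of_affine (g := fun s => penalized (a s) w θ S)
          (fun s => penalized_affine haff θ s S) hxt hty

theorem max_zero_one_sub_threshold_le_max
    (ha : ∀ t ∈ Set.Icc (0 : ℝ) 1, IsNonnegSubmodular (a t))
    (haff : ∀ t S, a t S = (1 - t) * a 0 S + t * a 1 S)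
    (hconst : ∀ t T, i ∉ T → a t T = a 0 T) (hw : ∀ j, 0 < w j)
    {x t y : ℝ} (hx : 0 ≤ x) (hxt : x ≤ t) (hty : t ≤ y) (hy : y ≤ 1) :
    max 0 (1 - threshold (a t) w univ i) ≤
      max (max 0 (1 - threshold (a x) w univ i)) (max 0 (1 - threshold (a y) w univ i)) := by
  rcases min_le_iff.1 (min_threshold_le_threshold ha haff hconst hw hx hxt hty hy) with h | h
  · exact le_max_of_le_left (max_le_max le_rfl (by linarith))
  · exact le_max_of_le_right (max_le_max le_rfl (by linarith))

/-- Both `θ < Θ(t)` and `Θ(t) < θ` are witnessed by finitely many strict inequalities between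
continuous functions of `t`. -/
theorem continuousOn_threshold (ha : ∀ t ∈ Set.Icc (0 : ℝ) 1, IsNonnegSubmodular (a t))
    (haff : ∀ t S, a t S = (1 - t) * a 0 S + t * a 1 S) (hw : ∀ j, 0 < w j) :
    ContinuousOn (fun t => threshold (a t) w univ i) (Set.Icc 0 1) := by
  intro t₀ ht₀
  have hmem : ∀ t ∈ Set.Icc (0 : ℝ) 1, ∀ θ,
      θ ∈ thresholdSet (a t) w univ i ↔ threshold (a t) w univ i ≤ θ :=
    fun t ht _ => mem_thresholdSet_iff (ha t ht) hw (mem_univ i)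
  have hcont := continuous_penalized_of_affine (w := w) haff
  refine tendsto_order.2 ⟨fun θ hθ => ?_, fun θ hθ => ?_⟩
  · obtain ⟨T, -, -, hT⟩ :=
      notMem_thresholdSet_iff.1 fun h => hθ.not_ge ((hmem t₀ ht₀ θ).1 h)
    have hev : ∀ᶠ t in 𝓝 t₀, ∀ S : Finset ι, i ∈ S →
        penalized (a t) w θ T < penalized (a t) w θ S :=
      eventually_all.2 fun S => eventually_imp_distrib_left.2 fun hiS =>
        (hcont θ T).continuousAt.eventually_lt (hcont θ S).continuousAt (hT S (subset_univ S) hiS)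
    filter_upwards [nhdsWithin_le_nhds hev, self_mem_nhdsWithin] with t ht htI
    by_contra! hle
    obtain ⟨S, hiS, -, hS⟩ := (hmem t htI θ).2 hle
    exact (hS T (subset_univ T)).not_gt (ht S hiS)
  · obtain ⟨θ', hθ₀, hθ'⟩ := exists_between hθ
    obtain ⟨S, -, hiS, hS⟩ := exists_penalized_lt_of_threshold_lt (ha t₀ ht₀) hw (mem_univ i) hθ₀
    have hev : ∀ᶠ t in 𝓝 t₀, ∀ T : Finset ι, i ∉ T →
        penalized (a t) w θ' S < penalized (a t) w θ' T :=
      eventually_all.2 fun T => eventually_imp_distrib_left.2 fun hiT =>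
        (hcont θ' S).continuousAt.eventually_lt (hcont θ' T).continuousAt (hS T (subset_univ T) hiT)
    filter_upwards [nhdsWithin_le_nhds hev, self_mem_nhdsWithin] with t ht htI
    refine lt_of_le_of_lt ((hmem t htI θ').1 ?_) hθ'
    by_contra hnot
    obtain ⟨T, -, hiT, hT⟩ := notMem_thresholdSet_iff.1 hnot
    exact (hT S (subset_univ S) hiS).not_gt (ht T hiT)

theorem exists_lines_eq_max_zero_one_sub_threshold
    (ha : ∀ t ∈ Set.Icc (0 : ℝ) 1, IsNonnegSubmodular (a t))
    (haff : ∀ t S, a t S = (1 - t) * a 0 S + t * a 1 S) (hw : ∀ j, 0 < w j) :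
    ∃ Φ : Finset (ℝ × ℝ), ∀ t ∈ Set.Icc (0 : ℝ) 1,
      ∃ φ ∈ Φ, max 0 (1 - threshold (a t) w univ i) = φ.1 * t + φ.2 := by
  let ratio (s : ℝ) (ST : Finset ι × Finset ι) : ℝ :=
    (a s ST.1 - a s ST.2) / (∑ j ∈ ST.1, w j - ∑ j ∈ ST.2, w j)
  refine ⟨insert (0, 0) (univ.image fun ST => (ratio 0 ST - ratio 1 ST, 1 - ratio 0 ST)),
    fun t ht => ?_⟩
  rcases le_total (1 - threshold (a t) w univ i) 0 with h | h
  · exact ⟨(0, 0), mem_insert_self _ _, by simp [max_eq_left h]⟩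
  obtain ⟨S, T, hlt, heq⟩ := exists_tie_at_threshold (ha t ht) hw (mem_univ i)
  refine ⟨_, mem_insert_of_mem (mem_image_of_mem _ (mem_univ (S, T))), ?_⟩
  rw [max_eq_right h, eq_div_of_mul_eq (sub_pos.2 hlt).ne' heq]
  simp only [ratio]
  rw [haff t S, haff t T]
  field_simp
  ring

theorem isPiecewiseAffineOn_max_zero_one_sub_threshold
    (ha : ∀ t ∈ Set.Icc (0 : ℝ) 1, IsNonnegSubmodular (a t))
    (haff : ∀ t S, a t S = (1 - t) * a 0 S + t * a 1 S) (hw : ∀ j, 0 < w j) :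
    IsPiecewiseAffineOn (fun t => max 0 (1 - threshold (a t) w univ i)) 0 1 := by
  obtain ⟨Φ, hΦ⟩ := exists_lines_eq_max_zero_one_sub_threshold ha haff hw
  exact .of_continuousOn zero_le_one
    (continuousOn_const.sup (continuousOn_const.sub (continuousOn_threshold ha haff hw))) hΦ

end Segment

theorem _root_.inSimplex.mem_Icc {m : ℕ} {q : Fin m → ℝ} (hq : inSimplex q) (j : Fin m) :
    q j ∈ Set.Icc 0 1 :=
  ⟨hq.1 j, hq.2 ▸ single_le_sum (fun k _ => hq.1 k) (mem_univ j)⟩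

theorem prod_add_prod_le_prod_union_add_prod_inter {ι : Type*} [DecidableEq ι] {f : ι → ℝ}
    (h0 : ∀ r, 0 ≤ f r) (h1 : ∀ r, f r ≤ 1) (S T : Finset ι) :
    ∏ r ∈ S, f r + ∏ r ∈ T, f r ≤ ∏ r ∈ S ∪ T, f r + ∏ r ∈ S ∩ T, f r := by
  have hS := prod_inter_mul_prod_sdiff S T f
  have hT := prod_inter_mul_prod_sdiff T S f
  have hU := prod_union (f := f) (disjoint_sdiff (s := S) (t := T))
  rw [union_sdiff_self_eq_union] at hU
  rw [inter_comm] at hT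
  rw [← hS, ← hT, hU, ← hS]
  have hP := prod_nonneg fun r (_ : r ∈ S ∩ T) => h0 r
  have hA := prod_le_one (fun r (_ : r ∈ S \ T) => h0 r) fun r _ => h1 r
  have hB := prod_le_one (fun r (_ : r ∈ T \ S) => h0 r) fun r _ => h1 r
  nlinarith [mul_nonneg (mul_nonneg hP (sub_nonneg.2 hA)) (sub_nonneg.2 hB)]

section Queue

variable {n m : ℕ} {p : Fin n → Fin m → ℝ} {μ q q' : Fin m → ℝ} {lam : Fin n → ℝ} {i : Fin n}

theorem alphaQ_empty (p : Fin n → Fin m → ℝ) (μ : Fin m → ℝ) (S : Finset (Fin n)) :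
    alphaQ p μ S ∅ = ∑ j, μ j * (1 - ∏ r ∈ S, (1 - p r j)) := by
  simp [alphaQ]

theorem isNonnegSubmodular_alphaQ (hp : ∀ r j, p r j ∈ Set.Icc 0 1) (hμ : ∀ j, 0 ≤ μ j) :
    IsNonnegSubmodular (alphaQ p μ · ∅) := by
  have hle : ∀ S j, ∏ r ∈ S, (1 - p r j) ≤ 1 := fun S j =>
    prod_le_one (fun r _ => sub_nonneg.2 (hp r j).2) fun r _ => by linarith [(hp r j).1]
  refine ⟨by simp [alphaQ_empty], fun S => ?_, fun S T => ?_⟩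
  · rw [alphaQ_empty]
    exact sum_nonneg fun j _ => mul_nonneg (hμ j) (sub_nonneg.2 (hle S j))
  · simp only [alphaQ_empty, ← sum_add_distrib]
    refine sum_le_sum fun j _ => ?_
    have := prod_add_prod_le_prod_union_add_prod_inter (f := fun r => 1 - p r j)
      (fun r => sub_nonneg.2 (hp r j).2) (fun r => by linarith [(hp r j).1]) S T
    nlinarith [hμ j]

theorem alphaQ_discount {S S₁ : Finset (Fin n)} (h : Disjoint S S₁) :
    alphaQ p (fun j => μ j * ∏ r ∈ S₁, (1 - p r j)) S ∅ =
      alphaQ p μ (S ∪ S₁) ∅ - alphaQ p μ S₁ ∅ := by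
  simp only [alphaQ_empty, ← sum_sub_distrib, prod_union h]
  exact sum_congr rfl fun j _ => by ring

theorem isRatioMin_topSet (hp : ∀ r j, p r j ∈ Set.Icc 0 1) (hμ : ∀ j, 0 ≤ μ j)
    (hlam : ∀ r, 0 < lam r) {I S₀ : Finset (Fin n)}
    (hS₀ : IsRatioMin (alphaQ p μ · ∅) lam I S₀) :
    IsRatioMin (alphaQ p μ · ∅) lam I (topSet p μ lam I) := by
  have ha := isNonnegSubmodular_alphaQ hp hμ
  have hcases : topSet p μ lam I = ∅ ∨ IsRatioMin (alphaQ p μ · ∅) lam I (topSet p μ lam I) := by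
    unfold topSet unionMin
    refine sup_induction (p := fun U => U = ∅ ∨ IsRatioMin (alphaQ p μ · ∅) lam I U) (Or.inl rfl)
      (fun S₁ h₁ S₂ h₂ => ?_) fun S hS => ?_
    · rcases h₁ with rfl | h₁
      · simpa using h₂
      rcases h₂ with rfl | h₂
      · simpa using Or.inr h₁
      exact Or.inr (h₁.union ha.submodular ha.map_empty hlam h₂)
    · split_ifs with h
      · exact Or.inr ⟨h.1, mem_powerset.1 hS, fun T hT => h.2 T (mem_powerset.2 hT)⟩
      · exact Or.inl rfl
  have hsub : S₀ ⊆ topSet p μ lam I := by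
    unfold topSet unionMin
    have := le_sup (f := fun S => if S.Nonempty ∧ ∀ T ∈ I.powerset, T.Nonempty →
      fQ p μ lam S ∅ ≤ fQ p μ lam T ∅ then S else ∅) (mem_powerset.2 hS₀.2.1)
    rwa [if_pos ⟨hS₀.1, fun T hT => hS₀.2.2 T (mem_powerset.1 hT)⟩] at this
  exact hcases.resolve_left fun h => hS₀.1.ne_empty (subset_empty.1 (h ▸ hsub))

theorem rateAux_eq_max_threshold (hp : ∀ r j, p r j ∈ Set.Icc 0 1) (hlam : ∀ r, 0 < lam r)
    (i : Fin n) : ∀ (fuel : ℕ) (I : Finset (Fin n)) (ν : Fin m → ℝ), (∀ j, 0 ≤ ν j) → i ∈ I →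
      I.card ≤ fuel → rateAux lam p fuel I ν i = max 0 (1 - threshold (alphaQ p ν · ∅) lam I i)
  | 0, I, ν, _, hi, hcard => absurd (card_pos.2 ⟨i, hi⟩) (by omega)
  | fuel + 1, I, ν, hν, hi, hcard => by
    have ha := isNonnegSubmodular_alphaQ hp hν
    by_cases hbig : ∀ S ∈ I.powerset, S.Nonempty → 1 ≤ fQ p ν lam S ∅
    · have h1 : 1 ≤ threshold (alphaQ p ν · ∅) lam I i :=
        le_threshold ha hlam hi fun T hT hTne => by
          have := hbig T (mem_powerset.2 hT) hTne
          rwa [fQ, lamQ, le_div_iff₀ (sum_pos (fun j _ => hlam j) hTne)] at this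
      rw [rateAux, if_pos hbig, max_eq_left (by linarith)]
    obtain ⟨S₀, hS₀⟩ := exists_isRatioMin (a := (alphaQ p ν · ∅)) (w := lam) ⟨i, hi⟩
    have htop := isRatioMin_topSet hp hν hlam hS₀
    by_cases hiS₁ : i ∈ topSet p ν lam I
    · have hF : alphaQ p ν (topSet p ν lam I) ∅ / ∑ j ∈ topSet p ν lam I, lam j < 1 := by
        push Not at hbig
        obtain ⟨S, hS, hSne, hlt⟩ := hbig
        exact (htop.2.2 S (mem_powerset.1 hS) hSne).trans_lt hlt
      rw [rateAux, if_neg hbig, if_pos hiS₁, htop.threshold_eq ha hlam hiS₁,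
        max_eq_right (by linarith)]
      rfl
    · have hν' : ∀ j, 0 ≤ ν j * ∏ r ∈ topSet p ν lam I, (1 - p r j) := fun j =>
        mul_nonneg (hν j) (prod_nonneg fun r _ => sub_nonneg.2 (hp r j).2)
      have hcard' : (I \ topSet p ν lam I).card ≤ fuel := by
        have := card_lt_card (sdiff_ssubset htop.2.1 htop.1)
        omega
      rw [rateAux, if_neg hbig, if_neg hiS₁,
        rateAux_eq_max_threshold hp hlam i fuel _ _ hν' (mem_sdiff.2 ⟨hi, hiS₁⟩) hcard', threshold,
        threshold, thresholdSet_eq_of_isPenalizedMin ha.submodular hlam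
          (htop.isPenalizedMin ha.map_empty hlam) hiS₁
          fun S hS => alphaQ_discount (sdiff_disjoint.mono_left hS)]

theorem rateQ_eq_max_threshold (hp : ∀ r j, p r j ∈ Set.Icc 0 1) (hμ : ∀ j, 0 ≤ μ j)
    (hlam : ∀ r, 0 < lam r) (i : Fin n) :
    rateQ lam μ p i = max 0 (1 - threshold (alphaQ p μ · ∅) lam univ i) :=
  rateAux_eq_max_threshold hp hlam i _ _ _ hμ (mem_univ i) (by simp)

theorem update_segment_mem_Icc (hp : ∀ r, inSimplex (p r)) (hq : inSimplex q)
    (hq' : inSimplex q') (i : Fin n) {t : ℝ} (ht : t ∈ Set.Icc (0 : ℝ) 1) (r : Fin n)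
    (j : Fin m) : Function.update p i (fun j => t * q j + (1 - t) * q' j) r j ∈ Set.Icc 0 1 := by
  rcases eq_or_ne r i with rfl | hr
  · rw [Function.update_self]
    simpa using convex_Icc (0 : ℝ) 1 (hq.mem_Icc j) (hq'.mem_Icc j) ht.1 (sub_nonneg.2 ht.2)
      (by ring)
  · rw [Function.update_of_ne hr]
    exact (hp r).mem_Icc j

theorem alphaQ_update_of_notMem {S : Finset (Fin n)} (hiS : i ∉ S) (v : Fin m → ℝ) :
    alphaQ (Function.update p i v) μ S ∅ = alphaQ p μ S ∅ := by
  simp only [alphaQ_empty]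
  refine sum_congr rfl fun j _ => ?_
  rw [prod_congr rfl fun r hr => by rw [Function.update_of_ne (ne_of_mem_of_not_mem hr hiS)]]

theorem alphaQ_update_segment_affine (t : ℝ) (S : Finset (Fin n)) :
    alphaQ (Function.update p i fun j => t * q j + (1 - t) * q' j) μ S ∅ =
      (1 - t) * alphaQ (Function.update p i fun j => 0 * q j + (1 - 0) * q' j) μ S ∅ +
        t * alphaQ (Function.update p i fun j => 1 * q j + (1 - 1) * q' j) μ S ∅ := by
  by_cases hiS : i ∈ S
  · have hprod : ∀ (v : Fin m → ℝ) j, ∏ r ∈ S, (1 - Function.update p i v r j) =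
        (1 - v j) * ∏ r ∈ S.erase i, (1 - p r j) := fun v j => by
      rw [← mul_prod_erase S _ hiS, Function.update_self]
      congr 1
      exact prod_congr rfl fun r hr => by rw [Function.update_of_ne (ne_of_mem_erase hr)]
    simp only [alphaQ_empty, hprod, mul_sum, ← sum_add_distrib]
    exact sum_congr rfl fun j _ => by ring
  · simp only [alphaQ_update_of_notMem hiS]
    ring

end Queue

end QueueRate

open QueueRate

theorem statement11_general {n m : ℕ}
    (lam : Fin n → ℝ) (μ : Fin m → ℝ) (p : Fin n → Fin m → ℝ)
    (hlam : ∀ i, 0 < lam i ∧ lam i < 1) (hmu : ∀ j, 0 ≤ μ j ∧ μ j ≤ 1)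
    (hp : ∀ i, inSimplex (p i))
    (i : Fin n) (q q' : Fin m → ℝ) (hq : inSimplex q) (hq' : inSimplex q') :
    (∃ (N : ℕ) (ts : Fin (N + 1) → ℝ), StrictMono ts ∧ ts 0 = 0 ∧ ts (Fin.last N) = 1 ∧
      ∀ k : Fin N, ∃ c d : ℝ, ∀ t ∈ Set.Icc (ts k.castSucc) (ts k.succ),
        rateQ lam μ (Function.update p i fun j => t * q j + (1 - t) * q' j) i
          = c * t + d) ∧
    (¬ ∃ a b c : ℝ, 0 ≤ a ∧ a < b ∧ b < c ∧ c ≤ 1 ∧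
      rateQ lam μ (Function.update p i fun j => a * q j + (1 - a) * q' j) i <
        rateQ lam μ (Function.update p i fun j => b * q j + (1 - b) * q' j) i ∧
      rateQ lam μ (Function.update p i fun j => c * q j + (1 - c) * q' j) i <
        rateQ lam μ (Function.update p i fun j => b * q j + (1 - b) * q' j) i) ∧
    (∀ a t b : ℝ, 0 ≤ a → a ≤ t → t ≤ b → b ≤ 1 →
      rateQ lam μ (Function.update p i fun j => t * q j + (1 - t) * q' j) i ≤
        max (rateQ lam μ (Function.update p i fun j => a * q j + (1 - a) * q' j) i)
          (rateQ lam μ (Function.update p i fun j => b * q j + (1 - b) * q' j) i)) := by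
  have hlam' : ∀ r, 0 < lam r := fun r => (hlam r).1
  have hμ : ∀ j, 0 ≤ μ j := fun j => (hmu j).1
  let α : ℝ → Finset (Fin n) → ℝ := fun t S =>
    alphaQ (Function.update p i fun j => t * q j + (1 - t) * q' j) μ S ∅
  have hrow := fun t (ht : t ∈ Set.Icc (0 : ℝ) 1) => update_segment_mem_Icc hp hq hq' i ht
  have ha : ∀ t ∈ Set.Icc (0 : ℝ) 1, IsNonnegSubmodular (α t) :=
    fun t ht => isNonnegSubmodular_alphaQ (hrow t ht) hμ
  have hconst : ∀ t T, i ∉ T → α t T = α 0 T := fun t T hiT => by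
    simp only [α, alphaQ_update_of_notMem hiT]
  have hrate : ∀ t ∈ Set.Icc (0 : ℝ) 1,
      rateQ lam μ (Function.update p i fun j => t * q j + (1 - t) * q' j) i =
        max 0 (1 - threshold (α t) lam univ i) :=
    fun t ht => rateQ_eq_max_threshold (hrow t ht) hμ hlam' i
  refine ⟨(isPiecewiseAffineOn_max_zero_one_sub_threshold ha alphaQ_update_segment_affine
    hlam').congr fun t ht => (hrate t ht).symm, ?_, fun x t y hx hxt hty hy => ?_⟩
  · rintro ⟨x, t, y, hx, hxt, hty, hy, h₁, h₂⟩
    rw [hrate x ⟨hx, by linarith⟩, hrate t ⟨by linarith, by linarith⟩] at h₁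
    rw [hrate y ⟨by linarith, hy⟩, hrate t ⟨by linarith, by linarith⟩] at h₂
    exact (max_zero_one_sub_threshold_le_max ha alphaQ_update_segment_affine hconst hlam' hx
      hxt.le hty.le hy).not_gt (max_lt h₁ h₂)
  · rw [hrate x ⟨hx, by linarith⟩, hrate t ⟨by linarith, by linarith⟩, hrate y ⟨by linarith, hy⟩]
    exact max_zero_one_sub_threshold_le_max ha alphaQ_update_segment_affine hconst hlam' hx hxt
      hty hy

/-- **Restriction of `r_i` to a segment (Lemma 3.5).** Fix queue `i`, the strategies of the
other queues (the rows of `p` other than `i`), and two strategies `q, q'`. Then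
`h(t) = r_i(t·q + (1-t)·q', p_{-i})` is piecewise linear on `[0,1]`, has no local maximum
in the interior (it never strictly increases and then strictly decreases), and in
particular is quasiconvex: `h(t) ≤ max {h(a), h(b)}` for all `0 ≤ a ≤ t ≤ b ≤ 1`. -/
theorem statement11 {n m : ℕ} (hn : 1 ≤ n) (hm : 1 ≤ m)
    (lam : Fin n → ℝ) (μ : Fin m → ℝ) (p : Fin n → Fin m → ℝ)
    (hlam : ∀ i, 0 < lam i ∧ lam i < 1) (hmu : ∀ j, 0 ≤ μ j ∧ μ j ≤ 1)
    (hp : ∀ i, inSimplex (p i))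
    (i : Fin n) (q q' : Fin m → ℝ) (hq : inSimplex q) (hq' : inSimplex q') :
    (∃ (N : ℕ) (ts : Fin (N + 1) → ℝ), StrictMono ts ∧ ts 0 = 0 ∧ ts (Fin.last N) = 1 ∧
      ∀ k : Fin N, ∃ c d : ℝ, ∀ t ∈ Set.Icc (ts k.castSucc) (ts k.succ),
        rateQ lam μ (Function.update p i fun j => t * q j + (1 - t) * q' j) i
          = c * t + d) ∧
    (¬ ∃ a b c : ℝ, 0 ≤ a ∧ a < b ∧ b < c ∧ c ≤ 1 ∧
      rateQ lam μ (Function.update p i fun j => a * q j + (1 - a) * q' j) i <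
        rateQ lam μ (Function.update p i fun j => b * q j + (1 - b) * q' j) i ∧
      rateQ lam μ (Function.update p i fun j => c * q j + (1 - c) * q' j) i <
        rateQ lam μ (Function.update p i fun j => b * q j + (1 - b) * q' j) i) ∧
    (∀ a t b : ℝ, 0 ≤ a → a ≤ t → t ≤ b → b ≤ 1 →
      rateQ lam μ (Function.update p i fun j => t * q j + (1 - t) * q' j) i ≤
        max (rateQ lam μ (Function.update p i fun j => a * q j + (1 - a) * q' j) i)
          (rateQ lam μ (Function.update p i fun j => b * q j + (1 - b) * q' j) i)) :=
  statement11_general lam μ p hlam hmu hp i q q' hq hq'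
end
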